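/- arXiv:2403.04630 — 4 statements merged into one kernel-verified Lean document; each statement's English description precedes it below -/
import Mathlib

section
/- Let T, D ∈ ℕ. For every pair of edge-neighboring insertion-only graph streams S, S' of length T and every time step t ∈ [T], the edge distance between the BBDS-projected streams satisfies d_edge(Π^BBDS_D(S)_[t], Π^BBDS_D(S')_[t]) ≤ 3. -/
open Finset

/-- A finite graph: a finite vertex set together with a finite set of undirected edges. -/
structure FinGraph where
  verts : Finset ℕ
  edges : Finset (Sym2 ℕ)

namespace FinGraph

/-- A finite graph is valid if every edge is a non-loop both of whose endpoints are vertices. -/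
def Valid (G : FinGraph) : Prop :=
  ∀ e ∈ G.edges, ¬ e.IsDiag ∧ ∀ v ∈ e, v ∈ G.verts

/-- The degree of a vertex: the number of edges containing it. -/
def degree (G : FinGraph) (v : ℕ) : ℕ :=
  (G.edges.filter (fun e => v ∈ e)).card

/-- Remove a node and all of its adjacent edges. -/
def removeNode (G : FinGraph) (v : ℕ) : FinGraph :=
  ⟨G.verts.erase v, G.edges.filter (fun e => v ∉ e)⟩

/-- Remove a single edge. -/
def removeEdge (G : FinGraph) (e : Sym2 ℕ) : FinGraph :=
  ⟨G.verts, G.edges.erase e⟩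

/-- `G` is `(D, ℓ)`-bounded: it has at most `ℓ` nodes of degree greater than `D`. -/
def DLBounded (G : FinGraph) (D ℓ : ℕ) : Prop :=
  (G.verts.filter (fun v => D < G.degree v)).card ≤ ℓ

end FinGraph

/-- One graph is obtained from the other by removing one node and all of its adjacent edges. -/
def nodeNeighborGraph (G G' : FinGraph) : Prop :=
  (∃ v ∈ G.verts, G' = G.removeNode v) ∨ (∃ v ∈ G'.verts, G = G'.removeNode v)

/-- `G'` is obtained from `G` by removing a single edge, an isolated node,
or a degree-one node together with its adjacent edge. -/
def edgeRemovalGraph (G G' : FinGraph) : Prop :=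
  (∃ e ∈ G.edges, G' = G.removeEdge e) ∨
  (∃ v ∈ G.verts, G.degree v = 0 ∧ G' = FinGraph.mk (G.verts.erase v) G.edges) ∨
  (∃ v ∈ G.verts, G.degree v = 1 ∧ G' = G.removeNode v)

/-- Edge-neighboring graphs. -/
def edgeNeighborGraph (G G' : FinGraph) : Prop :=
  edgeRemovalGraph G G' ∨ edgeRemovalGraph G' G

/-- The length of a shortest chain of valid graphs from `A` to `B` in which
consecutive graphs are related by `R`. -/
noncomputable def graphChainDist (R : FinGraph → FinGraph → Prop) (A B : FinGraph) : ℕ :=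
  sInf {n | ∃ f : ℕ → FinGraph, f 0 = A ∧ f n = B ∧ (∀ i ≤ n, (f i).Valid) ∧
    ∀ i < n, R (f i) (f (i + 1))}

/-- Node distance between finite graphs. -/
noncomputable def graphNodeDist : FinGraph → FinGraph → ℕ := graphChainDist nodeNeighborGraph

/-- Edge distance between finite graphs. -/
noncomputable def graphEdgeDist : FinGraph → FinGraph → ℕ := graphChainDist edgeNeighborGraph

/-- An insertion-only graph stream: the nodes and edges arriving at each time step. -/
structure GraphStream where
  nodes : ℕ → Finset ℕ
  edges : ℕ → Finset (Sym2 ℕ)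

namespace GraphStream

/-- Validity of a graph stream of length `T`: arrivals happen only at times `1, …, T`,
no node or edge arrives twice, and every edge is a non-loop whose endpoints
arrive at or before the edge does. -/
def Valid (T : ℕ) (S : GraphStream) : Prop :=
  (∀ t, ((S.nodes t).Nonempty ∨ (S.edges t).Nonempty) → 1 ≤ t ∧ t ≤ T) ∧
  (∀ s t, s ≠ t → Disjoint (S.nodes s) (S.nodes t)) ∧
  (∀ s t, s ≠ t → Disjoint (S.edges s) (S.edges t)) ∧
  (∀ t, ∀ e ∈ S.edges t, ¬ e.IsDiag ∧ ∀ v ∈ e, ∃ s ≤ t, v ∈ S.nodes s)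

/-- The flattened graph of the stream through time `t`. -/
def flat (S : GraphStream) (t : ℕ) : FinGraph :=
  ⟨(Finset.range (t + 1)).biUnion S.nodes, (Finset.range (t + 1)).biUnion S.edges⟩

/-- Remove a node and all of its adjacent edges from a stream. -/
def removeNode (S : GraphStream) (v : ℕ) : GraphStream :=
  ⟨fun t => (S.nodes t).erase v, fun t => (S.edges t).filter (fun e => v ∉ e)⟩

/-- Remove a single edge from a stream. -/
def removeEdge (S : GraphStream) (e : Sym2 ℕ) : GraphStream :=
  ⟨S.nodes, fun t => (S.edges t).erase e⟩

/-- Truncation of a stream: keep only arrivals at times `≤ t`. -/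
def trunc (S : GraphStream) (t : ℕ) : GraphStream :=
  ⟨fun s => if s ≤ t then S.nodes s else ∅, fun s => if s ≤ t then S.edges s else ∅⟩

/-- `v` arrives at some point in the stream. -/
def hasNode (S : GraphStream) (v : ℕ) : Prop :=
  ∃ t, v ∈ S.nodes t

/-- The stream is `(D, ℓ)`-bounded through time `t`. -/
def DLBoundedThrough (S : GraphStream) (D ℓ t : ℕ) : Prop :=
  (S.flat t).DLBounded D ℓ

end GraphStream

/-- `S'` is obtained from `S` by removing one node and all of its adjacent edges
(which may arrive at many time steps). -/
def nodeRemovalStream (S S' : GraphStream) : Prop :=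
  ∃ v, S.hasNode v ∧ S' = S.removeNode v

/-- Node-neighboring streams. -/
def nodeNeighborStream (S S' : GraphStream) : Prop :=
  nodeRemovalStream S S' ∨ nodeRemovalStream S' S

/-- `S'` is obtained from the length-`T` stream `S` by removing a single edge,
an isolated node, or a degree-one node together with its adjacent edge. -/
def edgeRemovalStream (T : ℕ) (S S' : GraphStream) : Prop :=
  (∃ t, ∃ e ∈ S.edges t, S' = S.removeEdge e) ∨
  (∃ v, S.hasNode v ∧ (S.flat T).degree v ≤ 1 ∧ S' = S.removeNode v)

/-- Edge-neighboring streams (of length `T`). -/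
def edgeNeighborStream (T : ℕ) (S S' : GraphStream) : Prop :=
  edgeRemovalStream T S S' ∨ edgeRemovalStream T S' S

/-- Length of a shortest chain of valid streams of length `T` in which consecutive
streams are related by `R`. -/
noncomputable def streamChainDist (T : ℕ) (R : GraphStream → GraphStream → Prop)
    (A B : GraphStream) : ℕ :=
  sInf {n | ∃ f : ℕ → GraphStream, f 0 = A ∧ f n = B ∧ (∀ i ≤ n, (f i).Valid T) ∧
    ∀ i < n, R (f i) (f (i + 1))}

/-- Node distance between streams of length `T`. -/
noncomputable def streamNodeDist (T : ℕ) : GraphStream → GraphStream → ℕ :=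
  streamChainDist T nodeNeighborStream

/-- Edge distance between streams of length `T`. -/
noncomputable def streamEdgeDist (T : ℕ) : GraphStream → GraphStream → ℕ :=
  streamChainDist T (edgeNeighborStream T)

/-- A fixed injective key on undirected edges, providing the consistent total order in
which edges arriving at the same time step are processed. -/
def edgeKey : Sym2 ℕ → ℕ :=
  Sym2.lift ⟨fun a b => Nat.pair (min a b) (max a b), fun a b => by
    dsimp only; rw [inf_comm, sup_comm]⟩

/-- The two endpoints of an edge, as an ordered pair. -/
def endpointsOf (e : Sym2 ℕ) : ℕ × ℕ := (edgeKey e).unpair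

/-- The edges of a finite edge set, listed in increasing `edgeKey` order. -/
def sortEdges (E : Finset (Sym2 ℕ)) : List (Sym2 ℕ) :=
  ((E.image edgeKey).sort (· ≤ ·)).map fun k => s(k.unpair.1, k.unpair.2)

/-- All edges of a stream of length `T`, tagged with their arrival times, in processing
order: lexicographically by (arrival time, consistent edge order). -/
def GraphStream.procList (S : GraphStream) (T : ℕ) : List (ℕ × Sym2 ℕ) :=
  (List.range (T + 1)).flatMap fun t => (sortEdges (S.edges t)).map fun e => (t, e)

/-- One step of the greedy projection with degree bound `D`.  The state consists of the
degree counters together with the edges kept so far (indexed by arrival time).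
If `bbds = true` the counters of the endpoints are incremented for every processed edge
(the BBDS rule); if `bbds = false` they are incremented only when the edge is kept
(the DLL rule). -/
def projStep (D : ℕ) (bbds : Bool) (st : (ℕ → ℕ) × (ℕ → Finset (Sym2 ℕ)))
    (p : ℕ × Sym2 ℕ) : (ℕ → ℕ) × (ℕ → Finset (Sym2 ℕ)) :=
  let d := st.1
  let u := (endpointsOf p.2).1
  let v := (endpointsOf p.2).2
  let keep : Bool := decide (d u < D ∧ d v < D)
  ((if bbds || keep then fun w => if w = u ∨ w = v then d w + 1 else d w else d),
   (if keep then fun s => if s = p.1 then insert p.2 (st.2 s) else st.2 s else st.2))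

/-- The time-aware projection with degree bound `D` on streams of length `T`:
the BBDS projection if `bbds = true` and the DLL projection if `bbds = false`.
All arriving nodes are kept; an arriving edge is kept (at its arrival time) iff both of
its endpoints have counter value `< D` when the edge is processed. -/
def project (bbds : Bool) (D T : ℕ) (S : GraphStream) : GraphStream :=
  ⟨S.nodes,
   ((S.procList T).foldl (projStep D bbds)
      ((fun _ => 0 : ℕ → ℕ), (fun _ => ∅ : ℕ → Finset (Sym2 ℕ)))).2⟩

/-- The BBDS projection `Π^BBDS_D` on streams of length `T`. -/
def projBBDS (D T : ℕ) : GraphStream → GraphStream := project true D T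

/-- The DLL projection `Π^DLL_D` on streams of length `T`. -/
def projDLL (D T : ℕ) : GraphStream → GraphStream := project false D T

/-!
BBDS increments the counters of both endpoints of every processed edge, kept or not. Deleting
one edge `e` from the processing order therefore only lowers the later counters of the two
endpoints of `e` by one. Raising a single counter by one can only turn kept edges into dropped
ones, and at most one of them: the first edge whose decision flips pushes that counter to `D`,
after which both runs make the same decisions. So the projection of `S` without `e` keeps what
the projection of `S` keeps, except possibly `e`, plus at most two more edges, and the two
truncated projections meet, through their common part, after one edge deletion on one side and
two on the other. Deleting a node of degree at most one is the same, except that the first step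
deletes the node together with its at most one projected edge.
-/

theorem List.flatMap_eq_append_cons_of_nodup {α β : Type*} {l : List α} (hl : l.Nodup)
    {x : α} (hx : x ∈ l) {g g' : α → List β} (hgg' : ∀ y ∈ l, y ≠ x → g' y = g y)
    {a : β} {F₁ F₂ : List β} (hg : g x = F₁ ++ a :: F₂) (hg' : g' x = F₁ ++ F₂) :
    ∃ L₁ L₂, l.flatMap g = L₁ ++ a :: L₂ ∧ l.flatMap g' = L₁ ++ L₂ := by
  obtain ⟨l₁, l₂, rfl⟩ := List.append_of_mem hx
  have hx₁₂ : x ∉ l₁ ++ l₂ := (List.nodup_cons.mp (List.nodup_middle.mp hl)).1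
  have hcongr : ∀ y ∈ l₁ ++ l₂, g' y = g y := fun y hy =>
    hgg' y (by simp only [List.mem_append, List.mem_cons] at hy ⊢; tauto) fun h => hx₁₂ (h ▸ hy)
  refine ⟨l₁.flatMap g ++ F₁, F₂ ++ l₂.flatMap g, by simp [hg], ?_⟩
  rw [List.flatMap_append, List.flatMap_cons, hg',
    List.flatMap_congr fun y hy => hcongr y (List.mem_append_left _ hy),
    List.flatMap_congr fun y hy => hcongr y (List.mem_append_right _ hy)]
  simp

theorem List.Sublist.card_toFinset_sdiff_le {α : Type*} [DecidableEq α] {l₁ l₂ : List α}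
    (h : l₁.Sublist l₂) : (l₂.toFinset \ l₁.toFinset).card ≤ l₂.length - l₁.length := by
  obtain ⟨r, hr⟩ := h.exists_perm_append
  have hsub : l₂.toFinset \ l₁.toFinset ⊆ r.toFinset := fun x hx => by
    have hx₂ := hr.subset (List.mem_toFinset.mp (Finset.mem_sdiff.mp hx).1)
    simp_all
  have hlen := hr.length_eq
  rw [List.length_append] at hlen
  exact (Finset.card_le_card hsub).trans (r.toFinset_card_le.trans (by omega))

theorem Finset.card_filter_sdiff_filter_le {α : Type*} [DecidableEq α] (F G : Finset α)
    (p : α → Prop) [DecidablePred p] : (F.filter p \ G.filter p).card ≤ (F \ G).card :=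
  Finset.card_le_card fun x hx => by
    simp only [Finset.mem_sdiff, Finset.mem_filter] at hx ⊢
    tauto

theorem FinGraph.degree_le_of_edges_subset {G H : FinGraph} (h : G.edges ⊆ H.edges) (v : ℕ) :
    G.degree v ≤ H.degree v :=
  Finset.card_le_card (Finset.filter_subset_filter _ h)

theorem mk_unpair_edgeKey (e : Sym2 ℕ) : s((edgeKey e).unpair.1, (edgeKey e).unpair.2) = e := by
  induction e using Sym2.ind with
  | h a b =>
    simp only [edgeKey, Sym2.lift_mk, Nat.unpair_pair]
    rcases le_total a b with hab | hab
    · simp [hab]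
    · simp [hab, Sym2.eq_swap]

theorem edgeKey_injective : Function.Injective edgeKey := fun e₁ e₂ h => by
  rw [← mk_unpair_edgeKey e₁, ← mk_unpair_edgeKey e₂, h]

theorem mem_sortEdges {E : Finset (Sym2 ℕ)} {e : Sym2 ℕ} : e ∈ sortEdges E ↔ e ∈ E := by
  simp only [sortEdges, List.mem_map, Finset.mem_sort, Finset.mem_image]
  constructor
  · rintro ⟨_, ⟨e', he', rfl⟩, rfl⟩
    rwa [mk_unpair_edgeKey]
  · exact fun he => ⟨_, ⟨e, he, rfl⟩, mk_unpair_edgeKey e⟩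

theorem sortEdges_erase {E : Finset (Sym2 ℕ)} {e : Sym2 ℕ} (he : e ∈ E) :
    ∃ l₁ l₂, sortEdges E = l₁ ++ e :: l₂ ∧ sortEdges (E.erase e) = l₁ ++ l₂ := by
  have hsort : ((E.erase e).image edgeKey).sort (· ≤ ·) =
      ((E.image edgeKey).sort (· ≤ ·)).erase (edgeKey e) := by
    rw [Finset.image_erase edgeKey_injective]
    refine List.Perm.eq_of_pairwise' (Finset.pairwise_sort _ _)
      ((Finset.pairwise_sort (E.image edgeKey) (· ≤ ·)).sublist List.erase_sublist) ?_
    rw [← Multiset.coe_eq_coe, ← Multiset.coe_erase, Finset.sort_eq, Finset.sort_eq,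
      Finset.erase_val]
  obtain ⟨l₁, l₂, -, hkeys, herase⟩ :=
    List.exists_erase_eq ((Finset.mem_sort (· ≤ ·)).mpr (Finset.mem_image_of_mem edgeKey he))
  refine ⟨l₁.map fun k => s(k.unpair.1, k.unpair.2), l₂.map fun k => s(k.unpair.1, k.unpair.2),
    ?_, ?_⟩
  · simp only [sortEdges, hkeys, List.map_append, List.map_cons, mk_unpair_edgeKey]
  · simp only [sortEdges, hsort, herase, List.map_append]

attribute [ext] GraphStream

def StreamChain (T : ℕ) (R : GraphStream → GraphStream → Prop) (n : ℕ)
    (A B : GraphStream) : Prop :=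
  ∃ f : ℕ → GraphStream, f 0 = A ∧ f n = B ∧ (∀ i ≤ n, (f i).Valid T) ∧
    ∀ i < n, R (f i) (f (i + 1))

namespace StreamChain

variable {T m n : ℕ} {R : GraphStream → GraphStream → Prop} {A B M : GraphStream}

theorem streamChainDist_le (h : StreamChain T R n A B) : streamChainDist T R A B ≤ n :=
  Nat.sInf_le h

theorem refl (hA : A.Valid T) : StreamChain T R 0 A A :=
  ⟨fun _ => A, rfl, rfl, fun _ _ => hA, fun _ h => absurd h (Nat.not_lt_zero _)⟩

theorem single (h : R A B) (hA : A.Valid T) (hB : B.Valid T) : StreamChain T R 1 A B := by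
  refine ⟨fun i => if i = 0 then A else B, rfl, rfl, fun i _ => ?_, fun i hi => ?_⟩
  · by_cases hi : i = 0 <;> simp [hi, hA, hB]
  · obtain rfl : i = 0 := by omega
    exact h

theorem symm (hR : ∀ {X Y}, R X Y → R Y X) (h : StreamChain T R n A B) :
    StreamChain T R n B A := by
  obtain ⟨f, hf0, hfn, hfv, hfR⟩ := h
  refine ⟨fun i => f (n - i), by simpa using hfn, by simpa using hf0,
    fun i _ => hfv _ (Nat.sub_le n i), fun i hi => ?_⟩
  have hi' : n - i = n - (i + 1) + 1 := by omega
  simp only [hi']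
  exact hR (hfR _ (by omega))

theorem trans (h₁ : StreamChain T R m A M) (h₂ : StreamChain T R n M B) :
    StreamChain T R (m + n) A B := by
  obtain ⟨f, hf0, hfm, hfv, hfR⟩ := h₁
  obtain ⟨g, hg0, hgn, hgv, hgR⟩ := h₂
  set h : ℕ → GraphStream := fun i => if i < m then f i else g (i - m)
  have hf : ∀ i ≤ m, h i = f i := fun i hi => by
    rcases hi.lt_or_eq with hi | rfl
    · exact if_pos hi
    · simp [h, hfm, hg0]
  have hg : ∀ i, m ≤ i → h i = g (i - m) := fun i hi => if_neg (by omega)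
  refine ⟨h, (hf 0 (Nat.zero_le m)).trans hf0, by simp [hg, hgn], fun i hi => ?_, fun i hi => ?_⟩
  · rcases le_total i m with him | hmi
    · exact hf i him ▸ hfv i him
    · exact hg i hmi ▸ hgv _ (by omega)
  · rcases lt_or_ge i m with him | hmi
    · rw [hf i him.le, hf (i + 1) him]
      exact hfR i him
    · rw [hg i hmi, hg (i + 1) (by omega), Nat.sub_add_comm hmi]
      exact hgR _ (by omega)

end StreamChain

theorem edgeNeighborStream_symm {T : ℕ} {A B : GraphStream} (h : edgeNeighborStream T A B) :
    edgeNeighborStream T B A :=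
  h.symm

namespace GraphStream

variable {S A B : GraphStream} {T t : ℕ}

theorem Valid.of_nodes_eq_of_edges_subset (hB : B.Valid t) (hn : A.nodes = B.nodes)
    (he : ∀ s, A.edges s ⊆ B.edges s) : A.Valid t := by
  obtain ⟨hTime, hNodes, hEdges, hEnds⟩ := hB
  refine ⟨fun s hs => hTime s ?_, hn ▸ hNodes, fun s s' hss' => (hEdges s s' hss').mono (he s)
    (he s'), fun s e hes => ?_⟩
  · rw [hn] at hs
    exact hs.imp_right (·.mono (he s))
  · rw [hn]
    exact hEnds s e (he s hes)

theorem Valid.removeEdge (hS : S.Valid t) (e : Sym2 ℕ) : (S.removeEdge e).Valid t :=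
  hS.of_nodes_eq_of_edges_subset rfl fun _ => Finset.erase_subset _ _

theorem Valid.removeNode (hS : S.Valid t) (v : ℕ) : (S.removeNode v).Valid t := by
  obtain ⟨hTime, hNodes, hEdges, hEnds⟩ := hS
  refine ⟨fun s hs => hTime s ?_, fun s s' hss' => (hNodes s s' hss').mono
    (Finset.erase_subset _ _) (Finset.erase_subset _ _), fun s s' hss' => (hEdges s s' hss').mono
    (Finset.filter_subset _ _) (Finset.filter_subset _ _), fun s e hes => ?_⟩
  · exact hs.imp (·.mono (Finset.erase_subset _ _)) (·.mono (Finset.filter_subset _ _))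
  · obtain ⟨hes, hve⟩ := Finset.mem_filter.mp hes
    refine ⟨(hEnds s e hes).1, fun w hw => ?_⟩
    obtain ⟨s', hs's, hws'⟩ := (hEnds s e hes).2 w hw
    exact ⟨s', hs's, Finset.mem_erase.mpr ⟨by rintro rfl; exact hve hw, hws'⟩⟩

theorem Valid.trunc (hS : S.Valid T) (t : ℕ) : (S.trunc t).Valid t := by
  obtain ⟨hTime, hNodes, hEdges, hEnds⟩ := hS
  refine ⟨fun s hs => ?_, fun s s' hss' => ?_, fun s s' hss' => ?_, fun s e hes => ?_⟩
  all_goals simp only [GraphStream.trunc] at *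
  · split_ifs at hs with hst
    · exact ⟨(hTime s hs).1, hst⟩
    · simp at hs
  · split_ifs
    all_goals simp [hNodes s s' hss']
  · split_ifs
    all_goals simp [hEdges s s' hss']
  · split_ifs at hes with hst
    · refine ⟨(hEnds s e hes).1, fun w hw => ?_⟩
      obtain ⟨s', hs's, hw⟩ := (hEnds s e hes).2 w hw
      exact ⟨s', hs's, by rwa [if_pos (hs's.trans hst)]⟩
    · simp at hes

theorem Valid.removeNode_eq_self (hS : S.Valid t) {v : ℕ} (hv : ¬ S.hasNode v) :
    S.removeNode v = S := by
  have hv' : ∀ s, v ∉ S.nodes s := fun s hs => hv ⟨s, hs⟩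
  ext s : 2
  · exact Finset.erase_eq_of_notMem (hv' s)
  · refine Finset.filter_true_of_mem fun e he hve => ?_
    obtain ⟨s', -, hs'⟩ := (hS.2.2.2 s e he).2 v hve
    exact hv' s' hs'

theorem trunc_removeNode (v t : ℕ) : (S.removeNode v).trunc t = (S.trunc t).removeNode v := by
  ext s : 2 <;> simp only [GraphStream.trunc, GraphStream.removeNode] <;> split_ifs <;> simp

theorem mem_flat_edges (hS : S.Valid T) {s : ℕ} {e : Sym2 ℕ} (he : e ∈ S.edges s) :
    e ∈ (S.flat T).edges :=
  Finset.mem_biUnion.mpr ⟨s, Finset.mem_range.mpr (Nat.lt_succ_of_le (hS.1 s (.inr ⟨e, he⟩)).2), he⟩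

theorem removeNode_edges_of_degree_le_one (hS : S.Valid T) {v : ℕ}
    (hv : (S.flat T).degree v ≤ 1) :
    (S.removeNode v).edges = S.edges ∨
      ∃ t₀, ∃ e ∈ S.edges t₀, v ∈ e ∧ (S.removeNode v).edges = (S.removeEdge e).edges := by
  by_cases hex : ∃ t₀, ∃ e ∈ S.edges t₀, v ∈ e
  · obtain ⟨t₀, e, he, hve⟩ := hex
    have huniq : ∀ s, ∀ e' ∈ S.edges s, v ∈ e' → e' = e := fun s e' he' hve' =>
      Finset.card_le_one.mp hv _ (Finset.mem_filter.mpr ⟨mem_flat_edges hS he', hve'⟩) _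
        (Finset.mem_filter.mpr ⟨mem_flat_edges hS he, hve⟩)
    refine .inr ⟨t₀, e, he, hve, funext fun s => Finset.ext fun e' => ?_⟩
    simp only [GraphStream.removeNode, GraphStream.removeEdge, Finset.mem_filter,
      Finset.mem_erase]
    exact ⟨fun ⟨he', hve'⟩ => ⟨by rintro rfl; exact hve' hve, he'⟩,
      fun ⟨hne, he'⟩ => ⟨he', fun hve' => hne (huniq s e' he' hve')⟩⟩
  · simp only [not_exists, not_and] at hex
    exact .inl (funext fun s => Finset.filter_true_of_mem fun e he => hex s e he)

theorem Valid.edgeChain_removeNode (hA : A.Valid t) {v : ℕ} (hv : (A.flat t).degree v ≤ 1) :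
    ∃ n ≤ 1, StreamChain t (edgeNeighborStream t) n A (A.removeNode v) := by
  by_cases hnode : A.hasNode v
  · exact ⟨1, le_rfl, .single (.inl (.inr ⟨v, hnode, hv, rfl⟩)) hA (hA.removeNode v)⟩
  · refine ⟨0, zero_le_one, ?_⟩
    rw [hA.removeNode_eq_self hnode]
    exact .refl hA

theorem mem_procList {p : ℕ × Sym2 ℕ} (hp : p ∈ S.procList T) : p.2 ∈ S.edges p.1 := by
  simp only [GraphStream.procList, List.mem_flatMap, List.mem_map] at hp
  obtain ⟨_, _, e, he, rfl⟩ := hp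
  exact mem_sortEdges.mp he

theorem procList_removeEdge (hS : S.Valid T) {t₀ : ℕ} {e : Sym2 ℕ} (he : e ∈ S.edges t₀) :
    ∃ L₁ L₂, S.procList T = L₁ ++ (t₀, e) :: L₂ ∧ (S.removeEdge e).procList T = L₁ ++ L₂ := by
  obtain ⟨l₁, l₂, hl, hl'⟩ := sortEdges_erase he
  refine List.flatMap_eq_append_cons_of_nodup (F₁ := l₁.map (t₀, ·)) (F₂ := l₂.map (t₀, ·))
    List.nodup_range
    (List.mem_range.mpr (Nat.lt_succ_of_le (hS.1 t₀ (.inr ⟨e, he⟩)).2)) (fun s _ hs => ?_)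
    (by simp [hl]) (by simp [GraphStream.removeEdge, hl'])
  have he' : e ∉ S.edges s := fun h => Finset.disjoint_left.mp (hS.2.2.1 s t₀ hs) h he
  simp [GraphStream.removeEdge, Finset.erase_eq_of_notMem he']

def ofTimed (N : ℕ → Finset ℕ) (F : Finset (ℕ × Sym2 ℕ)) : GraphStream :=
  ⟨N, fun s => (F.filter (·.1 = s)).image Prod.snd⟩

variable {N : ℕ → Finset ℕ} {F G : Finset (ℕ × Sym2 ℕ)}

@[simp] theorem mem_ofTimed_edges {s : ℕ} {e : Sym2 ℕ} :
    e ∈ (ofTimed N F).edges s ↔ (s, e) ∈ F := by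
  simp [ofTimed]

theorem ofTimed_trunc :
    (ofTimed N F).trunc t = ofTimed (fun s => if s ≤ t then N s else ∅) (F.filter (·.1 ≤ t)) := by
  ext s e : 3
  · rfl
  · simp only [GraphStream.trunc, mem_ofTimed_edges, Finset.mem_filter]
    split_ifs with hst <;> simp [hst]

theorem ofTimed_removeNode (v : ℕ) :
    (ofTimed N F).removeNode v = ofTimed (fun s => (N s).erase v) (F.filter (v ∉ ·.2)) := by
  ext s e : 3
  · rfl
  · simp [GraphStream.removeNode]

theorem Valid.ofTimed_mono (hG : (ofTimed N G).Valid t) (hFG : F ⊆ G) :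
    (ofTimed N F).Valid t :=
  hG.of_nodes_eq_of_edges_subset rfl fun _ e he => by simpa using hFG (by simpa using he)

/-- In a valid stream an edge arrives only once, so `p` is its only timed copy in `F`. -/
theorem Valid.ofTimed_removeEdge (hF : (ofTimed N F).Valid t) {p : ℕ × Sym2 ℕ} (hp : p ∈ F) :
    (ofTimed N F).removeEdge p.2 = ofTimed N (F.erase p) := by
  ext s e : 3
  · rfl
  simp only [GraphStream.removeEdge, Finset.mem_erase, mem_ofTimed_edges]
  refine ⟨fun ⟨hep, hse⟩ => ⟨fun h => hep (by rw [← h]), hse⟩, fun ⟨hsep, hse⟩ => ⟨?_, hse⟩⟩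
  rintro rfl
  have hs : s ≠ p.1 := fun h => hsep (by rw [h])
  exact Finset.disjoint_left.mp (hF.2.2.1 s p.1 hs) (by simpa using hse) (by simpa using hp)

theorem edgeChain_ofTimed_of_subset (hG : (ofTimed N G).Valid t) (hFG : F ⊆ G) :
    StreamChain t (edgeNeighborStream t) (G \ F).card (ofTimed N G) (ofTimed N F) := by
  induction hn : (G \ F).card generalizing G with
  | zero =>
    obtain rfl : G = F :=
      (Finset.sdiff_eq_empty_iff_subset.mp (Finset.card_eq_zero.mp hn)).antisymm hFG
    exact .refl hG
  | succ n ih =>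
    obtain ⟨p, hp⟩ := Finset.card_pos.mp (show 0 < (G \ F).card by omega)
    obtain ⟨hpG, hpF⟩ := Finset.mem_sdiff.mp hp
    have hG' : (ofTimed N (G.erase p)).Valid t := hG.ofTimed_mono (Finset.erase_subset p G)
    have hstep : edgeNeighborStream t (ofTimed N G) (ofTimed N (G.erase p)) :=
      .inl (.inl ⟨p.1, p.2, by simpa using hpG, (hG.ofTimed_removeEdge hpG).symm⟩)
    have hcard : (G.erase p \ F).card = n := by
      rw [Finset.erase_sdiff_comm, Finset.card_erase_of_mem hp, hn, Nat.add_sub_cancel]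
    rw [Nat.add_comm]
    exact (StreamChain.single hstep hG hG').trans
      (ih hG' (fun x hx => Finset.mem_erase.mpr ⟨by rintro rfl; exact hpF hx, hFG hx⟩) hcard)

theorem edgeChain_ofTimed (hF : (ofTimed N F).Valid t) (hG : (ofTimed N G).Valid t) :
    StreamChain t (edgeNeighborStream t) ((F \ G).card + (G \ F).card)
      (ofTimed N F) (ofTimed N G) := by
  have hF' := edgeChain_ofTimed_of_subset hF Finset.inter_subset_left (F := F ∩ G)
  have hG' := edgeChain_ofTimed_of_subset hG Finset.inter_subset_right (F := F ∩ G)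
  rw [Finset.sdiff_inter_self_left] at hF'
  rw [Finset.sdiff_inter_self_right] at hG'
  exact hF'.trans (hG'.symm edgeNeighborStream_symm)

end GraphStream

namespace BBDS

def bump (c : ℕ → ℕ) (e : Sym2 ℕ) : ℕ → ℕ :=
  fun w => if w = (endpointsOf e).1 ∨ w = (endpointsOf e).2 then c w + 1 else c w

def incr (x : ℕ) (c : ℕ → ℕ) : ℕ → ℕ :=
  fun w => if w = x then c w + 1 else c w

def keeps (D : ℕ) (c : ℕ → ℕ) (e : Sym2 ℕ) : Bool :=
  decide (c (endpointsOf e).1 < D ∧ c (endpointsOf e).2 < D)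

def keptList (D : ℕ) : (ℕ → ℕ) → List (ℕ × Sym2 ℕ) → List (ℕ × Sym2 ℕ)
  | _, [] => []
  | c, p :: L => if keeps D c p.2 then p :: keptList D (bump c p.2) L else keptList D (bump c p.2) L

variable {D : ℕ}

theorem keptList_cons (c : ℕ → ℕ) (p : ℕ × Sym2 ℕ) (L : List (ℕ × Sym2 ℕ)) :
    keptList D c (p :: L) =
      if keeps D c p.2 then p :: keptList D (bump c p.2) L else keptList D (bump c p.2) L :=
  rfl

theorem keptList_sublist (c : ℕ → ℕ) (L : List (ℕ × Sym2 ℕ)) : (keptList D c L).Sublist L := by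
  induction L generalizing c with
  | nil => exact .slnil
  | cons p L ih =>
    rw [keptList_cons]
    split
    exacts [(ih _).cons_cons p, (ih _).cons p]

theorem keptList_append (c : ℕ → ℕ) (L₁ L₂ : List (ℕ × Sym2 ℕ)) :
    keptList D c (L₁ ++ L₂) =
      keptList D c L₁ ++ keptList D (L₁.foldl (fun c p => bump c p.2) c) L₂ := by
  induction L₁ generalizing c with
  | nil => rfl
  | cons p L₁ ih =>
    simp only [List.cons_append, keptList_cons, List.foldl_cons, ih]
    split <;> rfl

theorem bump_incr (c : ℕ → ℕ) (x : ℕ) (e : Sym2 ℕ) : bump (incr x c) e = incr x (bump c e) := by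
  funext w
  simp only [bump, incr]
  split_ifs <;> rfl

theorem le_bump (c : ℕ → ℕ) (e : Sym2 ℕ) (w : ℕ) : c w ≤ bump c e w := by
  unfold bump
  split_ifs <;> omega

theorem le_incr (c : ℕ → ℕ) (x w : ℕ) : c w ≤ incr x c w := by
  unfold incr
  split_ifs <;> omega

theorem keeps_of_le {c c' : ℕ → ℕ} (hcc' : ∀ w, c w ≤ c' w) {e : Sym2 ℕ}
    (h : keeps D c' e) : keeps D c e := by
  simp only [keeps, decide_eq_true_eq] at h ⊢
  exact ⟨(hcc' _).trans_lt h.1, (hcc' _).trans_lt h.2⟩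

theorem le_bump_of_keeps_of_not_keeps_incr {c : ℕ → ℕ} {x : ℕ} {e : Sym2 ℕ}
    (hc : keeps D c e) (hx : ¬ keeps D (incr x c) e) : D ≤ bump c e x := by
  simp only [keeps, bump, incr, decide_eq_true_eq] at hc hx ⊢
  generalize (endpointsOf e).1 = u at hc hx ⊢
  generalize (endpointsOf e).2 = v at hc hx ⊢
  by_cases hu : u = x <;> by_cases hv : v = x <;> simp_all

theorem keptList_incr_of_le {c : ℕ → ℕ} {x : ℕ} (hx : D ≤ c x) (L : List (ℕ × Sym2 ℕ)) :
    keptList D (incr x c) L = keptList D c L := by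
  induction L generalizing c with
  | nil => rfl
  | cons p L ih =>
    have hlt : ∀ y, incr x c y < D ↔ c y < D := fun y => by
      unfold incr
      split_ifs with hy
      · subst hy; omega
      · rfl
    have hkeeps : keeps D (incr x c) p.2 = keeps D c p.2 := by simp only [keeps, hlt]
    rw [keptList_cons, keptList_cons, hkeeps, bump_incr, ih (hx.trans (le_bump c p.2 x))]

theorem keptList_incr (c : ℕ → ℕ) (x : ℕ) (L : List (ℕ × Sym2 ℕ)) :
    (keptList D (incr x c) L).Sublist (keptList D c L) ∧
      (keptList D c L).length ≤ (keptList D (incr x c) L).length + 1 := by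
  induction L generalizing c with
  | nil => simp [keptList]
  | cons p L ih =>
    obtain ⟨ihsub, ihlen⟩ := ih (bump c p.2)
    rw [keptList_cons, keptList_cons, bump_incr]
    by_cases hx : keeps D (incr x c) p.2
    · have hc : keeps D c p.2 := keeps_of_le (le_incr c x) hx
      simp only [hx, hc, if_true, List.length_cons]
      exact ⟨ihsub.cons_cons p, by omega⟩
    · by_cases hc : keeps D c p.2
      · simp only [hx, hc, if_true, Bool.false_eq_true, if_false,
          keptList_incr_of_le (le_bump_of_keeps_of_not_keeps_incr hc hx)]
        exact ⟨(List.Sublist.refl _).cons p, by simp⟩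
      · simp only [hx, hc, Bool.false_eq_true, if_false]
        exact ⟨ihsub, ihlen⟩

theorem keptList_bump (c : ℕ → ℕ) (e : Sym2 ℕ) (L : List (ℕ × Sym2 ℕ)) :
    (keptList D (bump c e) L).Sublist (keptList D c L) ∧
      (keptList D c L).length ≤ (keptList D (bump c e) L).length + 2 := by
  rcases hue : endpointsOf e with ⟨u, v⟩
  by_cases huv : u = v
  · have hbump : bump c e = incr u c := by
      funext w
      simp [bump, incr, hue, ← huv]
    rw [hbump]
    exact (keptList_incr c u L).imp id (·.trans (by omega))
  · have hbump : bump c e = incr u (incr v c) := by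
      funext w
      simp only [bump, incr, hue]
      split_ifs <;> simp_all
    obtain ⟨hsub₁, hlen₁⟩ := keptList_incr c v L
    obtain ⟨hsub₂, hlen₂⟩ := keptList_incr (incr v c) u L
    rw [hbump]
    exact ⟨hsub₂.trans hsub₁, by omega⟩

theorem keptList_middle (c : ℕ → ℕ) (L₁ L₂ : List (ℕ × Sym2 ℕ)) (p : ℕ × Sym2 ℕ) :
    ∃ X, X ⊆ keptList D c (L₁ ++ p :: L₂) ∧ keptList D c (L₁ ++ p :: L₂) ⊆ p :: X ∧
      X.Sublist (keptList D c (L₁ ++ L₂)) ∧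
      (keptList D c (L₁ ++ L₂)).length ≤ X.length + 2 := by
  obtain ⟨hsub, hlen⟩ := keptList_bump (D := D) (L₁.foldl (fun c p => bump c p.2) c) p.2 L₂
  refine ⟨keptList D c L₁ ++ keptList D (bump (L₁.foldl (fun c p => bump c p.2) c) p.2) L₂,
    ?_, ?_, ?_, ?_⟩
  · rw [keptList_append, keptList_cons]
    split <;> simp only [List.subset_def, List.mem_append, List.mem_cons] <;> tauto
  · rw [keptList_append, keptList_cons]
    split <;> simp only [List.subset_def, List.mem_append, List.mem_cons] <;> tauto
  · rw [keptList_append]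
    exact hsub.append_left _
  · simp only [keptList_append, List.length_append]
    omega

open GraphStream

variable {T : ℕ} {S : GraphStream}

theorem mem_foldl_projStep (L : List (ℕ × Sym2 ℕ)) (c : ℕ → ℕ) (E : ℕ → Finset (Sym2 ℕ))
    (s : ℕ) (e : Sym2 ℕ) :
    e ∈ (L.foldl (projStep D true) (c, E)).2 s ↔ e ∈ E s ∨ (s, e) ∈ keptList D c L := by
  induction L generalizing c E with
  | nil => simp [keptList]
  | cons p L ih =>
    have hstep : projStep D true (c, E) p = (bump c p.2, if keeps D c p.2 then
        fun s' => if s' = p.1 then insert p.2 (E s') else E s' else E) := rfl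
    rw [List.foldl_cons, hstep, ih, keptList_cons]
    split
    · dsimp only
      split_ifs with hs
      · subst hs
        simp only [Finset.mem_insert, List.mem_cons, Prod.ext_iff]
        tauto
      · simp [Prod.ext_iff, hs]
    · rfl

def keptSet (D T : ℕ) (S : GraphStream) : Finset (ℕ × Sym2 ℕ) :=
  (keptList D (fun _ => 0) (S.procList T)).toFinset

theorem projBBDS_eq_ofTimed : projBBDS D T S = ofTimed S.nodes (keptSet D T S) := by
  ext s e : 3
  · rfl
  · simp [projBBDS, project, keptSet, mem_foldl_projStep]

theorem trunc_projBBDS (t : ℕ) :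
    (projBBDS D T S).trunc t = ofTimed (S.trunc t).nodes ((keptSet D T S).filter (·.1 ≤ t)) := by
  rw [projBBDS_eq_ofTimed, ofTimed_trunc]
  rfl

theorem mem_keptSet {x : ℕ × Sym2 ℕ} (hx : x ∈ keptSet D T S) : x.2 ∈ S.edges x.1 :=
  mem_procList ((keptList_sublist _ _).subset (List.mem_toFinset.mp hx))

theorem keptSet_congr {S' : GraphStream} (h : S.edges = S'.edges) :
    keptSet D T S = keptSet D T S' := by
  simp only [keptSet, GraphStream.procList, h]

theorem valid_trunc_projBBDS (hS : S.Valid T) (t : ℕ) : ((projBBDS D T S).trunc t).Valid t := by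
  rw [trunc_projBBDS]
  refine (hS.trunc t).of_nodes_eq_of_edges_subset rfl fun s e he => ?_
  obtain ⟨hse, hst⟩ := Finset.mem_filter.mp (mem_ofTimed_edges.mp he)
  simpa [GraphStream.trunc, hst] using mem_keptSet hse

theorem keptSet_removeEdge (hS : S.Valid T) {t₀ : ℕ} {e : Sym2 ℕ} (he : e ∈ S.edges t₀) :
    keptSet D T S \ keptSet D T (S.removeEdge e) ⊆ {(t₀, e)} ∧
      (keptSet D T (S.removeEdge e) \ keptSet D T S).card ≤ 2 := by
  obtain ⟨L₁, L₂, hL, hL'⟩ := procList_removeEdge hS he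
  obtain ⟨X, hXK, hKX, hXK', hlen⟩ := keptList_middle (D := D) (fun _ => 0) L₁ L₂ (t₀, e)
  simp only [keptSet, hL, hL']
  refine ⟨fun x hx => ?_, ?_⟩
  · simp only [Finset.mem_sdiff, List.mem_toFinset] at hx
    rcases List.mem_cons.mp (hKX hx.1) with rfl | hxX
    · exact Finset.mem_singleton_self _
    · exact absurd (hXK'.subset hxX) hx.2
  · calc _ ≤ ((keptList D (fun _ => 0) (L₁ ++ L₂)).toFinset \ X.toFinset).card :=
          Finset.card_le_card (Finset.sdiff_subset_sdiff le_rfl fun x hx =>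
            List.mem_toFinset.mpr (hXK (List.mem_toFinset.mp hx)))
      _ ≤ _ := hXK'.card_toFinset_sdiff_le
      _ ≤ 2 := by omega

theorem keptSet_removeNode (hS : S.Valid T) {v : ℕ} (hv : (S.flat T).degree v ≤ 1) :
    (∀ x ∈ keptSet D T S, v ∉ x.2 → x ∈ keptSet D T (S.removeNode v)) ∧
      (keptSet D T (S.removeNode v) \ keptSet D T S).card ≤ 2 := by
  rcases removeNode_edges_of_degree_le_one hS hv with h | ⟨t₀, e, he, hve, h⟩
  · rw [keptSet_congr h]
    exact ⟨fun x hx _ => hx, by simp⟩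
  · rw [keptSet_congr h]
    obtain ⟨hdel, hadd⟩ := keptSet_removeEdge (D := D) hS he
    refine ⟨fun x hx hvx => ?_, hadd⟩
    by_contra hx'
    obtain rfl := Finset.mem_singleton.mp (hdel (Finset.mem_sdiff.mpr ⟨hx, hx'⟩))
    exact hvx hve

theorem edgeChain_projBBDS_removeEdge (hS : S.Valid T) {t₀ : ℕ} {e : Sym2 ℕ}
    (he : e ∈ S.edges t₀) (t : ℕ) :
    ∃ n ≤ 3, StreamChain t (edgeNeighborStream t) n
      ((projBBDS D T S).trunc t) ((projBBDS D T (S.removeEdge e)).trunc t) := by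
  obtain ⟨hdel, hadd⟩ := keptSet_removeEdge (D := D) hS he
  have hA := valid_trunc_projBBDS (D := D) hS t
  have hB := valid_trunc_projBBDS (D := D) (hS.removeEdge e) t
  rw [trunc_projBBDS] at hA hB
  rw [trunc_projBBDS, trunc_projBBDS]
  refine ⟨_, ?_, edgeChain_ofTimed hA hB⟩
  have hdel' := (Finset.card_le_card hdel).trans_eq (Finset.card_singleton _)
  have h₁ := Finset.card_filter_sdiff_filter_le (keptSet D T S)
    (keptSet D T (S.removeEdge e)) (·.1 ≤ t)
  have h₂ := Finset.card_filter_sdiff_filter_le (keptSet D T (S.removeEdge e))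
    (keptSet D T S) (·.1 ≤ t)
  omega

theorem edgeChain_projBBDS_removeNode (hS : S.Valid T) {v : ℕ} (hv : (S.flat T).degree v ≤ 1)
    (t : ℕ) :
    ∃ n ≤ 3, StreamChain t (edgeNeighborStream t) n
      ((projBBDS D T S).trunc t) ((projBBDS D T (S.removeNode v)).trunc t) := by
  obtain ⟨hkeep, hadd⟩ := keptSet_removeNode (D := D) hS hv
  have hA := valid_trunc_projBBDS (D := D) hS t
  have hB := valid_trunc_projBBDS (D := D) (hS.removeNode v) t
  have hdeg : (((projBBDS D T S).trunc t).flat t).degree v ≤ 1 := by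
    refine (FinGraph.degree_le_of_edges_subset (fun e he => ?_) v).trans hv
    obtain ⟨s, -, hes⟩ := Finset.mem_biUnion.mp he
    rw [trunc_projBBDS, mem_ofTimed_edges, Finset.mem_filter] at hes
    exact mem_flat_edges hS (mem_keptSet hes.1)
  obtain ⟨n, hn, hchain⟩ := hA.edgeChain_removeNode hdeg
  have hX := hA.removeNode v
  rw [trunc_projBBDS, ofTimed_removeNode] at hX hchain
  rw [trunc_projBBDS, trunc_removeNode] at hB
  rw [trunc_projBBDS, trunc_projBBDS, trunc_removeNode]
  refine ⟨_, ?_, hchain.trans (edgeChain_ofTimed hX hB)⟩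
  set K := keptSet D T S
  set K' := keptSet D T (S.removeNode v)
  have hX₀ : (K.filter (·.1 ≤ t)).filter (v ∉ ·.2) \ K'.filter (·.1 ≤ t) = ∅ := by
    refine Finset.sdiff_eq_empty_iff_subset.mpr fun x hx => ?_
    simp only [Finset.mem_filter] at hx ⊢
    exact ⟨hkeep x hx.1.1 hx.2, hx.1.2⟩
  have hB₂ : (K'.filter (·.1 ≤ t) \ (K.filter (·.1 ≤ t)).filter (v ∉ ·.2)).card ≤ 2 := by
    refine (Finset.card_le_card fun x hx => ?_).trans hadd
    have hvx : v ∉ x.2 := fun h => by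
      simpa [GraphStream.removeNode, h] using mem_keptSet (Finset.mem_filter.mp
        (Finset.mem_sdiff.mp hx).1).1
    simp only [Finset.mem_sdiff, Finset.mem_filter] at hx ⊢
    tauto
  rw [hX₀, Finset.card_empty]
  omega

theorem edgeChain_projBBDS_of_edgeRemovalStream {S' : GraphStream} (hS : S.Valid T)
    (h : edgeRemovalStream T S S') (t : ℕ) :
    ∃ n ≤ 3, StreamChain t (edgeNeighborStream t) n
      ((projBBDS D T S).trunc t) ((projBBDS D T S').trunc t) := by
  rcases h with ⟨t₀, e, he, rfl⟩ | ⟨v, -, hv, rfl⟩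
  exacts [edgeChain_projBBDS_removeEdge hS he t, edgeChain_projBBDS_removeNode hS hv t]

end BBDS

theorem bbds_edge_to_edge_stability_general (T D : ℕ) (S S' : GraphStream)
    (hS : S.Valid T) (hS' : S'.Valid T) (hnb : edgeNeighborStream T S S')
    (t : ℕ) :
    streamEdgeDist t ((projBBDS D T S).trunc t) ((projBBDS D T S').trunc t) ≤ 3 := by
  rcases hnb with h | h
  · obtain ⟨n, hn, hchain⟩ := BBDS.edgeChain_projBBDS_of_edgeRemovalStream hS h t
    exact hchain.streamChainDist_le.trans hn
  · obtain ⟨n, hn, hchain⟩ := BBDS.edgeChain_projBBDS_of_edgeRemovalStream hS' h t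
    exact (hchain.symm edgeNeighborStream_symm).streamChainDist_le.trans hn

/-- edge-to-edge stability of the BBDS projection.
For every pair of edge-neighboring insertion-only graph streams `S, S'` of length `T`
and every time step `t ∈ [T]`, the edge distance between the BBDS-projected streams
through time `t` is at most `3`. -/
theorem bbds_edge_to_edge_stability (T D : ℕ) (S S' : GraphStream)
    (hS : S.Valid T) (hS' : S'.Valid T) (hnb : edgeNeighborStream T S S')
    (t : ℕ) (ht1 : 1 ≤ t) (htT : t ≤ T) :
    streamEdgeDist t ((projBBDS D T S).trunc t) ((projBBDS D T S').trunc t) ≤ 3 :=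
  bbds_edge_to_edge_stability_general T D S S' hS hS' hnb t
end

section
/- Let k, ℓ ∈ ℕ ∪ {0}. Let G be a finite directed acyclic graph with at most ℓ + 1 vertices, and fix a topological ordering v_1, ..., v_n of its vertices (so every edge goes from a lower-indexed vertex to a higher-indexed vertex). Suppose that for every i ∈ {1, ..., n−1}, the i-th order-induced cut set — the set of edges (v_j, v_{j'}) with j ≤ i < j' — contains at most k edges. Then G has at most 2ℓ√k edges. -/
/-!
Count the total length `∑ (j' - j)` of the edges in two ways: every edge of length `d` crosses
exactly `d` order-induced cuts, so the total length is the sum of the cut sizes, at most `ℓ k`.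
With `t = ⌊√k⌋`, an edge of length at most `t` is determined by its tail and its length, so there
are at most `ℓ t ≤ ℓ √k` of them; each of the remaining edges has length at least `t + 1 > √k`,
so there are at most `ℓ k / (t + 1) ≤ ℓ √k` of them.
-/

open Finset

namespace OrderedDag

variable {n : ℕ}

def edgeLength (e : Fin n × Fin n) : ℕ := (e.2 : ℕ) - e.1

/-- Vertex `a : Fin n` stands for `v_{a+1}`, so this is the cut between `v_i` and `v_{i+1}`. -/
def cutSet (E : Finset (Fin n × Fin n)) (i : ℕ) : Finset (Fin n × Fin n) :=
  E.filter fun e => (e.1 : ℕ) + 1 ≤ i ∧ i ≤ (e.2 : ℕ)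

variable (E : Finset (Fin n × Fin n))

theorem sum_edgeLength_eq_sum_card_cutSet :
    ∑ e ∈ E, edgeLength e = ∑ i ∈ Icc 1 (n - 1), (cutSet E i).card := by
  simp_rw [cutSet, card_filter]
  rw [sum_comm]
  refine sum_congr rfl fun e _ => ?_
  have hcuts : (Icc 1 (n - 1)).filter (fun i => (e.1 : ℕ) + 1 ≤ i ∧ i ≤ e.2) =
      Icc ((e.1 : ℕ) + 1) e.2 := by
    ext i
    simp only [mem_filter, mem_Icc]
    omega
  rw [← card_filter, hcuts, Nat.card_Icc, edgeLength]
  omega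

theorem sum_edgeLength_le_mul {k : ℕ}
    (hcut : ∀ i, 1 ≤ i → i ≤ n - 1 → (cutSet E i).card ≤ k) :
    ∑ e ∈ E, edgeLength e ≤ (n - 1) * k := by
  rw [sum_edgeLength_eq_sum_card_cutSet]
  calc ∑ i ∈ Icc 1 (n - 1), (cutSet E i).card ≤ ∑ _i ∈ Icc 1 (n - 1), k :=
        sum_le_sum fun i hi => hcut i (mem_Icc.1 hi).1 (mem_Icc.1 hi).2
    _ = (n - 1) * k := by simp

theorem card_filter_edgeLength_le_le (hE : ∀ e ∈ E, e.1 < e.2) (t : ℕ) :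
    (E.filter fun e => edgeLength e ≤ t).card ≤ (n - 1) * t := by
  have hinj : Set.InjOn (fun e : Fin n × Fin n => ((e.1 : ℕ), edgeLength e - 1))
      (E.filter fun e => edgeLength e ≤ t) := by
    intro e he e' he' heq
    have hlt := hE e (mem_filter.1 he).1
    have hlt' := hE e' (mem_filter.1 he').1
    simp only [Prod.mk.injEq, edgeLength] at heq
    rw [Fin.lt_def] at hlt hlt'
    exact Prod.ext (Fin.ext heq.1) (Fin.ext (by omega))
  calc (E.filter fun e => edgeLength e ≤ t).card ≤ (range (n - 1) ×ˢ range t).card := by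
        refine card_le_card_of_injOn _ (fun e he => ?_) hinj
        obtain ⟨he, hshort⟩ := mem_filter.1 he
        have hlt : (e.1 : ℕ) < e.2 := hE e he
        have := e.2.isLt
        simp only [edgeLength] at hshort
        simp only [coe_product, Set.mem_prod, mem_coe, mem_range, edgeLength]
        omega
    _ = (n - 1) * t := by simp

theorem card_filter_edgeLength_gt_mul_le (t : ℕ) :
    (E.filter fun e => ¬edgeLength e ≤ t).card * (t + 1) ≤ ∑ e ∈ E, edgeLength e := by
  rw [← smul_eq_mul]
  calc (E.filter fun e => ¬edgeLength e ≤ t).card • (t + 1)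
      ≤ ∑ e ∈ E.filter (fun e => ¬edgeLength e ≤ t), edgeLength e :=
        card_nsmul_le_sum _ _ _ fun e he => by have := (mem_filter.1 he).2; omega
    _ ≤ ∑ e ∈ E, edgeLength e := sum_le_sum_of_subset (filter_subset _ _)

end OrderedDag

theorem cast_le_mul_sqrt_of_mul_sqrt_succ_le {b m k : ℕ} (h : b * (Nat.sqrt k + 1) ≤ m * k) :
    (b : ℝ) ≤ m * √k := by
  have h' : (b : ℝ) * (Nat.sqrt k + 1) ≤ m * k := by exact_mod_cast h
  have hk : (k : ℝ) ≤ √k * (Nat.sqrt k + 1) := by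
    calc (k : ℝ) = √k * √k := (Real.mul_self_sqrt k.cast_nonneg).symm
      _ ≤ √k * (Nat.sqrt k + 1) :=
        mul_le_mul_of_nonneg_left Real.real_sqrt_le_nat_sqrt_succ (Real.sqrt_nonneg k)
  refine le_of_mul_le_mul_right ?_ (by positivity : (0 : ℝ) < Nat.sqrt k + 1)
  calc (b : ℝ) * (Nat.sqrt k + 1) ≤ m * k := h'
    _ ≤ m * (√k * (Nat.sqrt k + 1)) := mul_le_mul_of_nonneg_left hk m.cast_nonneg
    _ = m * √k * (Nat.sqrt k + 1) := by ring

open OrderedDag in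
/-- number of edges in a structured DAG.
Let `k, ℓ ∈ ℕ`.  Let `G` be a finite DAG with `n ≤ ℓ + 1` vertices, given in a
topological ordering `v_1, …, v_n` (modelled as `Fin n`, every edge going from a
lower-indexed to a higher-indexed vertex).  If for every `i ∈ {1, …, n − 1}` the `i`-th
order-induced cut set — the set of edges `(v_j, v_{j'})` with `j ≤ i < j'` — has at most
`k` edges, then `G` has at most `2ℓ√k` edges.

Here a vertex `a : Fin n` represents `v_{a+1}`, so an edge `(a, b)` crosses the `i`-th
order-induced cut iff `a + 1 ≤ i ∧ i ≤ b`. -/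
theorem structured_dag_edge_count (k ℓ n : ℕ) (hn : n ≤ ℓ + 1)
    (E : Finset (Fin n × Fin n)) (hE : ∀ e ∈ E, e.1 < e.2)
    (hcut : ∀ i : ℕ, 1 ≤ i → i ≤ n - 1 →
      (E.filter fun e => (e.1 : ℕ) + 1 ≤ i ∧ i ≤ (e.2 : ℕ)).card ≤ k) :
    (E.card : ℝ) ≤ 2 * (ℓ : ℝ) * Real.sqrt (k : ℝ) := by
  set t := Nat.sqrt k
  have hm : n - 1 ≤ ℓ := by omega
  have hshort : ((E.filter fun e => edgeLength e ≤ t).card : ℝ) ≤ ℓ * √k := by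
    have h : (E.filter fun e => edgeLength e ≤ t).card ≤ ℓ * t :=
      (card_filter_edgeLength_le_le E hE t).trans (Nat.mul_le_mul_right t hm)
    calc ((E.filter fun e => edgeLength e ≤ t).card : ℝ) ≤ ℓ * t := by exact_mod_cast h
      _ ≤ ℓ * √k := mul_le_mul_of_nonneg_left Real.nat_sqrt_le_real_sqrt ℓ.cast_nonneg
  have hlong : ((E.filter fun e => ¬edgeLength e ≤ t).card : ℝ) ≤ ℓ * √k :=
    cast_le_mul_sqrt_of_mul_sqrt_succ_le <| (card_filter_edgeLength_gt_mul_le E t).trans <|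
      (sum_edgeLength_le_mul E hcut).trans (Nat.mul_le_mul_right k hm)
  rw [← card_filter_add_card_filter_not (fun e => edgeLength e ≤ t), Nat.cast_add]
  linarith
end

section
/- (Privacy of Propose-Test-Release under continual observation.) Let X be a set, T ∈ ℕ, ≃ a symmetric neighbor relation on X^T, Z ⊆ X^T, and Y a measurable space. Let Test assign to each x ∈ X^T a probability measure on {⊥,⊤}^T and let Base assign to each x ∈ X^T a probability measure on Y^T; assume both are streaming algorithms, i.e., for each t ∈ [T] the marginal distribution of the first t outputs depends only on the first t entries of the input. Define PTR(x) as the distribution of the pair (v, ỹ) where v ~ Test(x) and y ~ Base(x) are drawn independently, and ỹ_t = y_t for t < t_⊥(v) and ỹ_t = ⊥ for t ≥ t_⊥(v), where t_⊥(v) is the first index at which v equals ⊥ (t_⊥(v) = T + 1 if v never equals ⊥). Suppose: (i) for every t ∈ [T] and every pair of neighboring streams x ≃ x' whose prefixes x_[t] and x'_[t] each equal the t-element prefix of some element of Z, the marginals of the first t outputs of Base on x and x' are (ε_Base, δ_Base)-indistinguishable; (ii) for every pair of neighboring streams x ≃ x', Test(x) and Test(x') are (ε_Test, δ_Test)-indistinguishable;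 (iii) for every stream x and every t ∈ [T], if x_[t] does not equal the t-element prefix of any element of Z, then with probability at least 1 − β_Test over v ~ Test(x), t_⊥(v) ≤ t. Then for every pair of neighboring streams x ≃ x' in X^T, PTR(x) and PTR(x') are (ε, δ)-indistinguishable with ε = ε_Base + ε_Test and δ = δ_Base + (1 + e^{ε_Base + ε_Test})·δ_Test + (1 + e^{ε_Test})·e^{ε_Base + ε_Test}·β_Test. -/
open MeasureTheory

/-- Two measures are `(ε, δ)`-indistinguishable if, for every measurable set `Y`,
`P(Y) ≤ e^ε · Q(Y) + δ` and `Q(Y) ≤ e^ε · P(Y) + δ`. -/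
def Indist {Ω : Type*} [MeasurableSpace Ω] (ε δ : ℝ) (P Q : Measure Ω) : Prop :=
  ∀ Y : Set Ω, MeasurableSet Y →
    P Y ≤ ENNReal.ofReal (Real.exp ε) * Q Y + ENNReal.ofReal δ ∧
    Q Y ≤ ENNReal.ofReal (Real.exp ε) * P Y + ENNReal.ofReal δ


/-- The natural measurable-space structure on `Option α`, transported from `α ⊕ PUnit`. -/
instance {α : Type*} [MeasurableSpace α] : MeasurableSpace (Option α) :=
  MeasurableSpace.comap (Equiv.optionEquivSumPUnit.{0, _} α) inferInstance

/-- The map restricting a sequence of outputs to its first `t` entries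
(entries with index `≥ t` are masked by `none`). -/
def prefixMask {α : Type*} (T : ℕ) (t : ℕ) (y : Fin T → α) : Fin T → Option α :=
  fun s => if (s : ℕ) < t then some (y s) else none

/-- `x_[t]` equals the `t`-element prefix of some element of `Z`. -/
def PrefixInZ {X : Type*} (T : ℕ) (Z : Set (Fin T → X)) (t : ℕ) (x : Fin T → X) : Prop :=
  ∃ z ∈ Z, ∀ s : Fin T, (s : ℕ) < t → x s = z s

/-- The Propose-Test-Release mechanism: run `Test` and `Base` independently and release
the verdict stream `v` together with the output stream of `Base`, cut off from the first
time at which `Test` outputs `⊥` (here `false`) onwards. -/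
noncomputable def PTR {X Y : Type*} [MeasurableSpace Y] (T : ℕ)
    (Test : (Fin T → X) → Measure (Fin T → Bool))
    (Base : (Fin T → X) → Measure (Fin T → Y))
    (x : Fin T → X) : Measure ((Fin T → Bool) × (Fin T → Option Y)) :=
  Measure.map
    (fun p : (Fin T → Bool) × (Fin T → Y) =>
      (p.1, fun t : Fin T => if ∀ s : Fin T, s ≤ t → p.1 s = true then some (p.2 t) else none))
    ((Test x).prod (Base x))

/-! Let `t₀` be the last time at which both neighbouring inputs are consistent with `Z`. Unless
`Test` accepts through time `t₀ + 1`, the output of `PTR` is a function of the verdicts and of the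
first `t₀` outputs of `Base` only, so the composition theorem for the independent pair (`Test`,
`Base` cut at `t₀`) bounds it with `(ε_Base + ε_Test, e^{ε_Base} δ_Test + δ_Base)`. Acceptance
through time `t₀ + 1` has probability at most `e^{ε_Test} β_Test + δ_Test` under `x`: by soundness
if `x` leaves `Z` at `t₀ + 1`, and otherwise by soundness at `x'` transferred to `x` through the
indistinguishability of `Test`. -/

open scoped ENNReal

namespace Indist

variable {Ω : Type*} [MeasurableSpace Ω] {ε δ : ℝ} {P Q : Measure Ω}

theorem symm (h : Indist ε δ P Q) : Indist ε δ Q P :=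
  fun Y hY => (h Y hY).symm

theorem refl (hε : 0 ≤ ε) (P : Measure Ω) : Indist ε δ P P := by
  have h1 : (1 : ℝ≥0∞) ≤ ENNReal.ofReal (Real.exp ε) :=
    ENNReal.one_le_ofReal.mpr (Real.one_le_exp hε)
  refine fun Y _ => ⟨?_, ?_⟩ <;> exact le_add_right (le_mul_of_one_le_left' h1)

/-- Layer cake: integrate the bound `P {g > t} ≤ e^ε Q {g > t} + δ` over `t ∈ (0, 1]`. -/
theorem lintegral_le (h : Indist ε δ P Q) {g : Ω → ℝ≥0∞} (hg : Measurable g)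
    (hg1 : ∀ ω, g ω ≤ 1) :
    ∫⁻ ω, g ω ∂P ≤ ENNReal.ofReal (Real.exp ε) * ∫⁻ ω, g ω ∂Q + ENNReal.ofReal δ := by
  set f : Ω → ℝ := fun ω => (g ω).toReal
  have hf : Measurable f := hg.ennreal_toReal
  have layer (μ : Measure Ω) : ∫⁻ ω, g ω ∂μ = ∫⁻ t in Set.Ioi 0, μ {ω | t < f ω} := by
    have hfg : ∀ ω, ENNReal.ofReal (f ω) = g ω :=
      fun ω => ENNReal.ofReal_toReal (ne_top_of_le_ne_top ENNReal.one_ne_top (hg1 ω))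
    simp_rw [← hfg]
    exact lintegral_eq_lintegral_meas_lt μ (ae_of_all _ fun _ => ENNReal.toReal_nonneg)
      hf.aemeasurable
  have tail_le (t : ℝ) : P {ω | t < f ω} ≤ ENNReal.ofReal (Real.exp ε) * Q {ω | t < f ω}
      + (Set.Iic 1).indicator (fun _ => ENNReal.ofReal δ) t := by
    by_cases ht : t ≤ 1
    · rw [Set.indicator_of_mem (Set.mem_Iic.mpr ht)]
      exact (h _ (measurableSet_lt measurable_const hf)).1
    · have hempty : {ω | t < f ω} = ∅ := Set.eq_empty_of_forall_notMem fun ω hω =>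
        ht (hω.out.le.trans (ENNReal.toReal_le_of_le_ofReal zero_le_one (by simpa using hg1 ω)))
      simp [hempty]
  have hQ : Measurable fun t : ℝ => Q {ω | t < f ω} :=
    Antitone.measurable fun s t hst => measure_mono fun ω hω => lt_of_le_of_lt hst hω
  calc ∫⁻ ω, g ω ∂P = ∫⁻ t in Set.Ioi 0, P {ω | t < f ω} := layer P
    _ ≤ ∫⁻ t in Set.Ioi 0, (ENNReal.ofReal (Real.exp ε) * Q {ω | t < f ω}
          + (Set.Iic 1).indicator (fun _ => ENNReal.ofReal δ) t) := lintegral_mono tail_le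
    _ = ENNReal.ofReal (Real.exp ε) * ∫⁻ ω, g ω ∂Q + ENNReal.ofReal δ := by
      rw [lintegral_add_left (hQ.const_mul _), lintegral_const_mul _ hQ, ← layer Q,
        lintegral_indicator_const measurableSet_Iic, Measure.restrict_apply measurableSet_Iic,
        Set.Iic_inter_Ioi, Real.volume_Ioc, sub_zero, ENNReal.ofReal_one, mul_one]

variable {α β : Type*} [MeasurableSpace α] [MeasurableSpace β] {ε₁ δ₁ ε₂ δ₂ : ℝ}
  {μ μ' : Measure α} {ν ν' : Measure β}

theorem prod_apply_le [IsProbabilityMeasure μ] [SFinite μ'] [SFinite ν]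
    [IsProbabilityMeasure ν'] (hμ : Indist ε₁ δ₁ μ μ') (hν : Indist ε₂ δ₂ ν ν')
    (hδ₁ : 0 ≤ δ₁) (hδ₂ : 0 ≤ δ₂) {S : Set (α × β)} (hS : MeasurableSet S) :
    μ.prod ν S ≤ ENNReal.ofReal (Real.exp (ε₁ + ε₂)) * μ'.prod ν' S
      + ENNReal.ofReal (Real.exp ε₂ * δ₁ + δ₂) := by
  set E₁ := ENNReal.ofReal (Real.exp ε₁)
  set E₂ := ENNReal.ofReal (Real.exp ε₂)
  have hsec : Measurable fun a => ν' (Prod.mk a ⁻¹' S) := measurable_measure_prodMk_left hS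
  calc μ.prod ν S = ∫⁻ a, ν (Prod.mk a ⁻¹' S) ∂μ := Measure.prod_apply hS
    _ ≤ ∫⁻ a, (E₂ * ν' (Prod.mk a ⁻¹' S) + ENNReal.ofReal δ₂) ∂μ :=
      lintegral_mono fun a => (hν _ (measurable_prodMk_left hS)).1
    _ = E₂ * ∫⁻ a, ν' (Prod.mk a ⁻¹' S) ∂μ + ENNReal.ofReal δ₂ := by
      rw [lintegral_add_right _ measurable_const, lintegral_const_mul _ hsec, lintegral_const,
        measure_univ, mul_one]
    _ ≤ E₂ * (E₁ * ∫⁻ a, ν' (Prod.mk a ⁻¹' S) ∂μ' + ENNReal.ofReal δ₁) + ENNReal.ofReal δ₂ := by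
      gcongr
      exact hμ.lintegral_le hsec fun a => prob_le_one
    _ = ENNReal.ofReal (Real.exp (ε₁ + ε₂)) * μ'.prod ν' S
          + ENNReal.ofReal (Real.exp ε₂ * δ₁ + δ₂) := by
      rw [Measure.prod_apply hS, Real.exp_add, ENNReal.ofReal_mul (Real.exp_nonneg _),
        ENNReal.ofReal_add (by positivity) hδ₂, ENNReal.ofReal_mul (Real.exp_nonneg _)]
      ring

theorem prod [IsProbabilityMeasure μ] [IsProbabilityMeasure μ'] [IsProbabilityMeasure ν]
    [IsProbabilityMeasure ν'] (hμ : Indist ε₁ δ₁ μ μ') (hν : Indist ε₂ δ₂ ν ν')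
    (hδ₁ : 0 ≤ δ₁) (hδ₂ : 0 ≤ δ₂) :
    Indist (ε₁ + ε₂) (Real.exp ε₂ * δ₁ + δ₂) (μ.prod ν) (μ'.prod ν') := fun _ hS =>
  ⟨hμ.prod_apply_le hν hδ₁ hδ₂ hS, hμ.symm.prod_apply_le hν.symm hδ₁ hδ₂ hS⟩

end Indist

theorem measurable_some {α : Type*} [MeasurableSpace α] : Measurable (some : α → Option α) :=
  measurable_comap_iff.mpr measurable_inl

theorem measurable_pi_some {ι β : Type*} [MeasurableSpace β] :
    Measurable fun (y : ι → β) i => some (y i) :=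
  measurable_pi_lambda _ fun i => measurable_some.comp (measurable_pi_apply i)

section Release

variable {T : ℕ} {β : Type*}

variable (T) in
def release (q : (Fin T → Bool) × (Fin T → Option β)) : (Fin T → Bool) × (Fin T → Option β) :=
  (q.1, fun t => if ∀ s : Fin T, s ≤ t → q.1 s = true then q.2 t else none)

variable (T) in
def lateRelease (t₀ : ℕ) : Set (Fin T → Bool) :=
  {v | ∃ t : Fin T, t₀ ≤ (t : ℕ) ∧ ∀ s ≤ t, v s = true}

theorem release_prefixMask {t₀ : ℕ} {v : Fin T → Bool} (hv : v ∉ lateRelease T t₀)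
    (y : Fin T → β) : release T (v, prefixMask T t₀ y) = release T (v, fun t => some (y t)) := by
  refine Prod.ext rfl (funext fun t => ?_)
  by_cases hvt : ∀ s ≤ t, v s = true
  · have ht : (t : ℕ) < t₀ := by
      by_contra! ht
      exact hv ⟨t, ht, hvt⟩
    simp [release, prefixMask, ht]
  · simp [release, hvt]

variable [MeasurableSpace β]

theorem measurable_prefixMask (t : ℕ) : Measurable (prefixMask (α := β) T t) := by
  refine measurable_pi_lambda _ fun s => ?_
  by_cases h : (s : ℕ) < t
  · simp only [prefixMask, h, if_true]
    exact measurable_some.comp (measurable_pi_apply s)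
  · simp only [prefixMask, h, if_false]
    exact measurable_const

theorem map_prefixMask_zero (μ : Measure (Fin T → β)) [IsProbabilityMeasure μ] :
    μ.map (prefixMask T 0) = Measure.dirac fun _ => none := by
  have : prefixMask (α := β) T 0 = fun _ _ => none := by
    funext y s
    simp [prefixMask]
  rw [this, Measure.map_const, measure_univ, one_smul]

theorem measurable_release : Measurable (release (β := β) T) := by
  refine measurable_fst.prodMk (measurable_pi_lambda _ fun t => ?_)
  refine Measurable.ite ?_ ((measurable_pi_apply t).comp measurable_snd) measurable_const
  exact measurable_fst (MeasurableSet.of_discrete (s := {v : Fin T → Bool | ∀ s ≤ t, v s = true}))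

theorem PTR_eq_map_release {X : Type*} (Test : (Fin T → X) → Measure (Fin T → Bool))
    (Base : (Fin T → X) → Measure (Fin T → β)) (x : Fin T → X) [SFinite (Test x)]
    [SFinite (Base x)] :
    PTR T Test Base x = ((Test x).prod ((Base x).map fun y t => some (y t))).map (release T) := by
  rw [← Measure.map_id (μ := Test x), Measure.map_prod_map _ _ measurable_id measurable_pi_some,
    Measure.map_map measurable_release (measurable_id.prodMap measurable_pi_some)]
  rfl

theorem prod_map_prefixMask_apply_eq (μ : Measure (Fin T → Bool))
    (ν : Measure (Fin T → β)) [SFinite μ] [SFinite ν] (t₀ : ℕ)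
    {A : Set ((Fin T → Bool) × (Fin T → Option β))} (hA : MeasurableSet A) :
    μ.prod (ν.map (prefixMask T t₀)) (release T ⁻¹' A ∩ Prod.fst ⁻¹' (lateRelease T t₀)ᶜ)
      = μ.prod (ν.map fun y t => some (y t))
          (release T ⁻¹' A ∩ Prod.fst ⁻¹' (lateRelease T t₀)ᶜ) := by
  have hS : MeasurableSet (release T ⁻¹' A ∩ Prod.fst ⁻¹' (lateRelease T t₀)ᶜ) :=
    (measurable_release hA).inter (measurable_fst MeasurableSet.of_discrete.compl)
  rw [← Measure.map_id (μ := μ), Measure.map_prod_map _ _ measurable_id (measurable_prefixMask t₀),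
    Measure.map_prod_map _ _ measurable_id measurable_pi_some,
    Measure.map_apply (measurable_id.prodMap (measurable_prefixMask t₀)) hS,
    Measure.map_apply (measurable_id.prodMap measurable_pi_some) hS]
  congr 1
  ext ⟨v, y⟩
  simp only [Set.mem_preimage, Set.mem_inter_iff, Set.mem_compl_iff, Prod.map_apply, id_eq]
  exact and_congr_left fun hv => by rw [release_prefixMask hv]

theorem PTR_apply_le_of_cutoff {X : Type*} {Test : (Fin T → X) → Measure (Fin T → Bool)}
    {Base : (Fin T → X) → Measure (Fin T → β)} {x x' : Fin T → X}
    [IsProbabilityMeasure (Test x)] [IsProbabilityMeasure (Test x')]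
    [IsProbabilityMeasure (Base x)] [IsProbabilityMeasure (Base x')]
    {ε₁ δ₁ ε₂ δ₂ : ℝ} (hδ₁ : 0 ≤ δ₁) (hδ₂ : 0 ≤ δ₂) {t₀ : ℕ}
    (hTest : Indist ε₁ δ₁ (Test x) (Test x'))
    (hBase : Indist ε₂ δ₂ ((Base x).map (prefixMask T t₀)) ((Base x').map (prefixMask T t₀)))
    {A : Set ((Fin T → Bool) × (Fin T → Option β))} (hA : MeasurableSet A) :
    PTR T Test Base x A ≤ ENNReal.ofReal (Real.exp (ε₁ + ε₂)) * PTR T Test Base x' A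
      + ENNReal.ofReal (Real.exp ε₂ * δ₁ + δ₂) + Test x (lateRelease T t₀) := by
  have : IsProbabilityMeasure ((Base x).map (prefixMask T t₀)) :=
    Measure.isProbabilityMeasure_map (measurable_prefixMask t₀).aemeasurable
  have : IsProbabilityMeasure ((Base x').map (prefixMask T t₀)) :=
    Measure.isProbabilityMeasure_map (measurable_prefixMask t₀).aemeasurable
  have : IsProbabilityMeasure ((Base x).map fun y t => some (y t)) :=
    Measure.isProbabilityMeasure_map measurable_pi_some.aemeasurable
  set S := release T ⁻¹' A ∩ Prod.fst ⁻¹' (lateRelease T t₀)ᶜ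
  have hS : MeasurableSet S :=
    (measurable_release hA).inter (measurable_fst MeasurableSet.of_discrete.compl)
  have hPTR (x₀ : Fin T → X) [SFinite (Test x₀)] [SFinite (Base x₀)] :
      PTR T Test Base x₀ A
        = (Test x₀).prod ((Base x₀).map fun y t => some (y t)) (release T ⁻¹' A) := by
    rw [PTR_eq_map_release, Measure.map_apply measurable_release hA]
  calc PTR T Test Base x A
      ≤ (Test x).prod ((Base x).map fun y t => some (y t)) S
        + (Test x).prod ((Base x).map fun y t => some (y t)) (Prod.fst ⁻¹' lateRelease T t₀) := by
        rw [hPTR]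
        refine (measure_le_inter_add_sdiff _ _ _).trans (add_le_add le_rfl (measure_mono ?_))
        exact fun p hp => not_not.mp hp.2
    _ = (Test x).prod ((Base x).map (prefixMask T t₀)) S + Test x (lateRelease T t₀) := by
        rw [prod_map_prefixMask_apply_eq _ _ _ hA, ← Measure.fst_apply MeasurableSet.of_discrete,
          Measure.fst_prod]
    _ ≤ _ := by
        gcongr
        refine ((hTest.prod hBase hδ₁ hδ₂) S hS).1.trans ?_
        rw [prod_map_prefixMask_apply_eq _ _ _ hA, hPTR]
        gcongr
        exact Set.inter_subset_left

theorem measure_lateRelease_le {μ : Measure (Fin T → Bool)} [IsProbabilityMeasure μ] {t₀ : ℕ}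
    {b : ℝ} (h : ENNReal.ofReal (1 - b) ≤ μ {v | ∃ s : Fin T, (s : ℕ) < t₀ + 1 ∧ v s = false}) :
    μ (lateRelease T t₀) ≤ ENNReal.ofReal b := by
  set R := {v : Fin T → Bool | ∃ s : Fin T, (s : ℕ) < t₀ + 1 ∧ v s = false}
  have hsub : lateRelease T t₀ ⊆ Rᶜ := by
    rintro v ⟨t, ht, hv⟩ ⟨s, hs, hvs⟩
    simp [hv s (Fin.le_def.mpr (by omega))] at hvs
  calc μ (lateRelease T t₀) ≤ μ Rᶜ := measure_mono hsub
    _ = 1 - μ R := prob_compl_eq_one_sub MeasurableSet.of_discrete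
    _ ≤ ENNReal.ofReal b := by
      rw [tsub_le_iff_left]
      calc (1 : ℝ≥0∞) = ENNReal.ofReal (1 - b + b) := by simp
        _ ≤ ENNReal.ofReal (1 - b) + ENNReal.ofReal b := ENNReal.ofReal_add_le
        _ ≤ μ R + ENNReal.ofReal b := by gcongr

theorem exists_cutoff {μ μ' : Measure (Fin T → Bool)} [IsProbabilityMeasure μ]
    [IsProbabilityMeasure μ'] {ν ν' : Measure (Fin T → β)} [IsProbabilityMeasure ν]
    [IsProbabilityMeasure ν'] {Good Good' : ℕ → Prop} {ε₁ δ₁ ε₂ δ₂ b : ℝ}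
    (hε₁ : 0 ≤ ε₁) (hε₂ : 0 ≤ ε₂) (hμ : Indist ε₁ δ₁ μ μ')
    (hν : ∀ t : ℕ, 1 ≤ t → t ≤ T → Good t → Good' t →
      Indist ε₂ δ₂ (ν.map (prefixMask T t)) (ν'.map (prefixMask T t)))
    (hsound : ∀ t : ℕ, 1 ≤ t → t ≤ T → ¬ Good t →
      ENNReal.ofReal (1 - b) ≤ μ {v | ∃ s : Fin T, (s : ℕ) < t ∧ v s = false})
    (hsound' : ∀ t : ℕ, 1 ≤ t → t ≤ T → ¬ Good' t →
      ENNReal.ofReal (1 - b) ≤ μ' {v | ∃ s : Fin T, (s : ℕ) < t ∧ v s = false}) :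
    ∃ t₀ : ℕ, Indist ε₂ δ₂ (ν.map (prefixMask T t₀)) (ν'.map (prefixMask T t₀)) ∧
      μ (lateRelease T t₀)
        ≤ ENNReal.ofReal (Real.exp ε₁) * ENNReal.ofReal b + ENNReal.ofReal δ₁ := by
  classical
  set t₀ := Nat.findGreatest (fun t => t = 0 ∨ Good t ∧ Good' t) T with ht₀
  refine ⟨t₀, ?_, ?_⟩
  · rcases Nat.eq_zero_or_pos t₀ with h0 | hpos
    · rw [h0, map_prefixMask_zero, map_prefixMask_zero]
      exact Indist.refl hε₂ _
    · have hspec : t₀ = 0 ∨ Good t₀ ∧ Good' t₀ :=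
        Nat.findGreatest_spec (P := fun t => t = 0 ∨ Good t ∧ Good' t) (Nat.zero_le T) (Or.inl rfl)
      obtain ⟨hg, hg'⟩ := hspec.resolve_left hpos.ne'
      exact hν t₀ hpos (Nat.findGreatest_le T) hg hg'
  · rcases lt_or_ge t₀ T with hlt | hge
    · have hbad : ¬ (Good (t₀ + 1) ∧ Good' (t₀ + 1)) := fun h =>
        Nat.findGreatest_is_greatest (ht₀ ▸ lt_add_one t₀) hlt (Or.inr h)
      rcases not_and_or.mp hbad with hbad | hbad'
      · calc μ (lateRelease T t₀) ≤ ENNReal.ofReal b :=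
              measure_lateRelease_le (hsound (t₀ + 1) (by omega) hlt hbad)
          _ ≤ _ := le_add_right (le_mul_of_one_le_left' (ENNReal.one_le_ofReal.mpr
              (Real.one_le_exp hε₁)))
      · calc μ (lateRelease T t₀) ≤ ENNReal.ofReal (Real.exp ε₁) * μ' (lateRelease T t₀)
              + ENNReal.ofReal δ₁ := (hμ _ MeasurableSet.of_discrete).1
          _ ≤ _ := by
              gcongr
              exact measure_lateRelease_le (hsound' (t₀ + 1) (by omega) hlt hbad')
    · have hempty : lateRelease T t₀ = ∅ :=
        Set.eq_empty_of_forall_notMem fun v ⟨t, ht, _⟩ => by omega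
      simp [hempty]

end Release

theorem composition_delta_le {ε₁ ε₂ δ₁ δ₂ b : ℝ} (hε₁ : 0 ≤ ε₁) (hε₂ : 0 ≤ ε₂) (hδ₂ : 0 ≤ δ₂)
    (hb : 0 ≤ b) :
    Real.exp ε₁ * δ₂ + δ₁ + (Real.exp ε₂ * b + δ₂)
      ≤ δ₁ + (1 + Real.exp (ε₁ + ε₂)) * δ₂ + (1 + Real.exp ε₂) * Real.exp (ε₁ + ε₂) * b := by
  have h₁ : Real.exp ε₁ ≤ Real.exp (ε₁ + ε₂) := Real.exp_le_exp.mpr (by linarith)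
  have h₂ : Real.exp ε₂ ≤ Real.exp (ε₁ + ε₂) := Real.exp_le_exp.mpr (by linarith)
  nlinarith [mul_le_mul_of_nonneg_right h₁ hδ₂, mul_le_mul_of_nonneg_right h₂ hb,
    mul_nonneg (mul_nonneg (Real.exp_nonneg ε₂) (Real.exp_nonneg (ε₁ + ε₂))) hb]

theorem ptr_privacy_continual_observation_general
    {X Y : Type*} [MeasurableSpace Y] (T : ℕ)
    (Neighbor : (Fin T → X) → (Fin T → X) → Prop)
    (hsymm : ∀ x x', Neighbor x x' → Neighbor x' x)
    (Z : Set (Fin T → X))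
    (Test : (Fin T → X) → Measure (Fin T → Bool))
    (Base : (Fin T → X) → Measure (Fin T → Y))
    (hTestProb : ∀ x, IsProbabilityMeasure (Test x))
    (hBaseProb : ∀ x, IsProbabilityMeasure (Base x))
    (ε_Base δ_Base ε_Test δ_Test β_Test : ℝ)
    (hεB : 0 ≤ ε_Base) (hδB : 0 ≤ δ_Base) (hεT : 0 ≤ ε_Test) (hδT : 0 ≤ δ_Test)
    (hβ : 0 ≤ β_Test)
    -- (i) indistinguishability of `Base` on prefixes consistent with `Z`
    (hBase : ∀ t : ℕ, 1 ≤ t → t ≤ T → ∀ x x' : Fin T → X, Neighbor x x' →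
      PrefixInZ T Z t x → PrefixInZ T Z t x' →
      Indist ε_Base δ_Base
        (Measure.map (prefixMask T t) (Base x)) (Measure.map (prefixMask T t) (Base x')))
    -- (ii) `Test` is `(ε_Test, δ_Test)`-DP under continual observation
    (hTest : ∀ x x' : Fin T → X, Neighbor x x' → Indist ε_Test δ_Test (Test x) (Test x'))
    -- (iii) soundness of `Test`: if the prefix of `x` through time `t` leaves `Z`, then
    -- `Test` outputs `⊥` at or before time `t` with probability at least `1 − β_Test`
    (hSound : ∀ (x : Fin T → X) (t : ℕ), 1 ≤ t → t ≤ T → ¬ PrefixInZ T Z t x →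
      ENNReal.ofReal (1 - β_Test)
        ≤ Test x {v | ∃ s : Fin T, (s : ℕ) < t ∧ v s = false}) :
    ∀ x x' : Fin T → X, Neighbor x x' →
      Indist (ε_Base + ε_Test)
        (δ_Base + (1 + Real.exp (ε_Base + ε_Test)) * δ_Test
          + (1 + Real.exp ε_Test) * Real.exp (ε_Base + ε_Test) * β_Test)
        (PTR T Test Base x) (PTR T Test Base x') := by
  have hδ : ENNReal.ofReal (Real.exp ε_Base * δ_Test + δ_Base)
      + (ENNReal.ofReal (Real.exp ε_Test) * ENNReal.ofReal β_Test + ENNReal.ofReal δ_Test)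
      ≤ ENNReal.ofReal (δ_Base + (1 + Real.exp (ε_Base + ε_Test)) * δ_Test
          + (1 + Real.exp ε_Test) * Real.exp (ε_Base + ε_Test) * β_Test) := by
    rw [← ENNReal.ofReal_mul (Real.exp_nonneg _), ← ENNReal.ofReal_add (by positivity) hδT,
      ← ENNReal.ofReal_add (by positivity) (by positivity)]
    exact ENNReal.ofReal_le_ofReal (composition_delta_le hεB hεT hδT hβ)
  have key (x x' : Fin T → X) (hxx' : Neighbor x x') (A) (hA : MeasurableSet A) :
      PTR T Test Base x A ≤ ENNReal.ofReal (Real.exp (ε_Base + ε_Test)) * PTR T Test Base x' A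
        + ENNReal.ofReal (δ_Base + (1 + Real.exp (ε_Base + ε_Test)) * δ_Test
          + (1 + Real.exp ε_Test) * Real.exp (ε_Base + ε_Test) * β_Test) := by
    obtain ⟨t₀, hBase_t₀, hlate⟩ := exists_cutoff hεT hεB (hTest x x' hxx')
      (fun t ht1 htT => hBase t ht1 htT x x' hxx') (hSound x) (hSound x')
    calc PTR T Test Base x A
        ≤ ENNReal.ofReal (Real.exp (ε_Test + ε_Base)) * PTR T Test Base x' A
          + ENNReal.ofReal (Real.exp ε_Base * δ_Test + δ_Base) + Test x (lateRelease T t₀) :=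
          PTR_apply_le_of_cutoff hδT hδB (hTest x x' hxx') hBase_t₀ hA
      _ ≤ _ := by
          rw [add_comm ε_Test, add_assoc]
          gcongr
          exact (add_le_add le_rfl hlate).trans hδ
  exact fun x x' hxx' A hA => ⟨key x x' hxx' A hA, key x' x (hsymm x x' hxx') A hA⟩

/-- privacy of Propose-Test-Release under continual observation.
If `Base` is `(ε_Base, δ_Base)`-indistinguishable on all prefixes (of neighboring
streams) consistent with `Z`, `Test` is `(ε_Test, δ_Test)`-indistинguishable everywhere,
and `Test` outputs `⊥` with probability at least `1 − β_Test` by the first time the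
input leaves `Z`, then `PTR` is `(ε, δ)`-indistinguishable on all neighboring streams,
with `ε = ε_Base + ε_Test` and
`δ = δ_Base + (1 + e^{ε_Base+ε_Test}) δ_Test + (1 + e^{ε_Test}) e^{ε_Base+ε_Test} β_Test`. -/
theorem ptr_privacy_continual_observation
    {X Y : Type*} [MeasurableSpace Y] (T : ℕ)
    (Neighbor : (Fin T → X) → (Fin T → X) → Prop)
    (hsymm : ∀ x x', Neighbor x x' → Neighbor x' x)
    (Z : Set (Fin T → X))
    (Test : (Fin T → X) → Measure (Fin T → Bool))
    (Base : (Fin T → X) → Measure (Fin T → Y))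
    (hTestProb : ∀ x, IsProbabilityMeasure (Test x))
    (hBaseProb : ∀ x, IsProbabilityMeasure (Base x))
    -- `Test` is a streaming algorithm: prefixes of its output distribution depend only
    -- on the corresponding prefixes of the input.
    (hTestStream : ∀ (t : ℕ) (x x' : Fin T → X),
      (∀ s : Fin T, (s : ℕ) < t → x s = x' s) →
      Measure.map (prefixMask T t) (Test x) = Measure.map (prefixMask T t) (Test x'))
    -- `Base` is a streaming algorithm.
    (hBaseStream : ∀ (t : ℕ) (x x' : Fin T → X),
      (∀ s : Fin T, (s : ℕ) < t → x s = x' s) →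
      Measure.map (prefixMask T t) (Base x) = Measure.map (prefixMask T t) (Base x'))
    (ε_Base δ_Base ε_Test δ_Test β_Test : ℝ)
    (hεB : 0 ≤ ε_Base) (hδB : 0 ≤ δ_Base) (hεT : 0 ≤ ε_Test) (hδT : 0 ≤ δ_Test)
    (hβ : 0 ≤ β_Test)
    -- (i) indistinguishability of `Base` on prefixes consistent with `Z`
    (hBase : ∀ t : ℕ, 1 ≤ t → t ≤ T → ∀ x x' : Fin T → X, Neighbor x x' →
      PrefixInZ T Z t x → PrefixInZ T Z t x' →
      Indist ε_Base δ_Base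
        (Measure.map (prefixMask T t) (Base x)) (Measure.map (prefixMask T t) (Base x')))
    -- (ii) `Test` is `(ε_Test, δ_Test)`-DP under continual observation
    (hTest : ∀ x x' : Fin T → X, Neighbor x x' → Indist ε_Test δ_Test (Test x) (Test x'))
    -- (iii) soundness of `Test`: if the prefix of `x` through time `t` leaves `Z`, then
    -- `Test` outputs `⊥` at or before time `t` with probability at least `1 − β_Test`
    (hSound : ∀ (x : Fin T → X) (t : ℕ), 1 ≤ t → t ≤ T → ¬ PrefixInZ T Z t x →
      ENNReal.ofReal (1 - β_Test)
        ≤ Test x {v | ∃ s : Fin T, (s : ℕ) < t ∧ v s = false}) :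
    ∀ x x' : Fin T → X, Neighbor x x' →
      Indist (ε_Base + ε_Test)
        (δ_Base + (1 + Real.exp (ε_Base + ε_Test)) * δ_Test
          + (1 + Real.exp ε_Test) * Real.exp (ε_Base + ε_Test) * β_Test)
        (PTR T Test Base x) (PTR T Test Base x') :=
  ptr_privacy_continual_observation_general T Neighbor hsymm Z Test Base hTestProb hBaseProb ε_Base
    δ_Base ε_Test δ_Test β_Test hεB hδB hεT hδT hβ hBase hTest hSound
end

section
/- Let ε > 0, c ∈ ℕ with c ≥ 1, and τ ∈ ℝ. Let Z and Z' be independent real random variables, where Z has the Laplace distribution with scale 2/ε (density (ε/4)·e^{−ε|z|/2} with respect to Lebesgue measure) and Z' has the Laplace distribution with scale 4c/ε (density (ε/(8c))·e^{−ε|z|/(4c)}). Then for every x ∈ ℝ and q ∈ ℝ: (1) if x ≥ 0 and q ≥ x + τ, then P(q + Z' ≤ τ + Z) ≤ exp(−|x|·ε/(8c)); and (2) if x ≤ 0 and q ≤ x + τ, then P(q + Z' ≥ τ + Z) ≤ exp(−|x|·ε/(8c)). -/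
/-! If `q + Z' ≤ τ + Z` with `q - τ ≥ x ≥ 0`, then `Z - Z' ≥ x`, so `Z ≥ x/2` or `Z' ≤ -x/2`.
The union bound and the Laplace tail `P(Z ≥ u) = e^{-u/b}/2` give
`e^{-xε/4}/2 + e^{-xε/(8c)}/2 ≤ e^{-xε/(8c)}`, since the scale `2/ε` of `Z` is at most the
scale `4c/ε` of `Z'`. The second inequality is the first one reflected through the origin:
the product of two Laplace laws is invariant under `p ↦ -p`. -/

open MeasureTheory

/-- The Laplace distribution with scale `b`: the measure on `ℝ` with density
`(1/(2b))·e^{−|z|/b}` with respect to Lebesgue measure. -/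
noncomputable def laplace (b : ℝ) : Measure ℝ :=
  (volume : Measure ℝ).withDensity
    (fun z => ENNReal.ofReal ((1 / (2 * b)) * Real.exp (-|z| / b)))

instance (b : ℝ) : SigmaFinite (laplace b) := by
  unfold laplace
  infer_instance

open Real Set

namespace MeasureTheory.Measure

instance isNegInvariant_prod {α β : Type*} [MeasurableSpace α] [MeasurableSpace β]
    [Neg α] [Neg β] [MeasurableNeg α] [MeasurableNeg β]
    (μ : Measure α) (ν : Measure β) [SFinite μ] [SFinite ν] [μ.IsNegInvariant]
    [ν.IsNegInvariant] : (μ.prod ν).IsNegInvariant where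
  neg_eq_self := by
    rw [Measure.neg, show (Neg.neg : α × β → α × β) = Prod.map Neg.neg Neg.neg from rfl,
      ← map_prod_map μ ν measurable_neg measurable_neg, map_neg_eq_self, map_neg_eq_self]

lemma prod_setOf_add_le_sub_le {μ ν : Measure ℝ} [IsProbabilityMeasure μ]
    [IsProbabilityMeasure ν] (s t : ℝ) :
    μ.prod ν {p | s + t ≤ p.1 - p.2} ≤ μ (Ici s) + ν (Iic (-t)) := by
  have union : {p : ℝ × ℝ | s + t ≤ p.1 - p.2} ⊆ Ici s ×ˢ univ ∪ univ ×ˢ Iic (-t) := by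
    rintro ⟨z, z'⟩ (hp : s + t ≤ z - z')
    rcases le_or_gt s z with hz | hz
    · exact Or.inl ⟨hz, trivial⟩
    · exact Or.inr ⟨trivial, show z' ≤ -t by linarith⟩
  calc μ.prod ν {p | s + t ≤ p.1 - p.2}
      ≤ μ.prod ν (Ici s ×ˢ univ) + μ.prod ν (univ ×ˢ Iic (-t)) :=
        (measure_mono union).trans (measure_union_le _ _)
    _ = μ (Ici s) + ν (Iic (-t)) := by simp only [prod_prod, measure_univ, mul_one, one_mul]

end MeasureTheory.Measure

instance (b : ℝ) : NullSingletonClass (laplace b) := by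
  unfold laplace
  infer_instance

instance (b : ℝ) : (laplace b).IsNegInvariant where
  neg_eq_self := by
    ext s hs
    rw [Measure.neg, Measure.map_apply measurable_neg hs, laplace,
      withDensity_apply _ (measurable_neg hs), withDensity_apply _ hs]
    refine Eq.trans ?_ ((Measure.measurePreserving_neg volume).setLIntegral_comp_preimage hs
      (by fun_prop))
    simp only [abs_neg]

variable {b : ℝ}

lemma laplace_Ici (hb : 0 < b) {u : ℝ} (hu : 0 ≤ u) :
    laplace b (Ici u) = ENNReal.ofReal (exp (-u / b) / 2) := by
  have density_eq : EqOn (fun z => ENNReal.ofReal ((1 / (2 * b)) * exp (-|z| / b)))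
      (fun z => ENNReal.ofReal ((2 * b)⁻¹ * exp (-b⁻¹ * z))) (Ioi u) := by
    intro z hz
    simp only [abs_of_pos (hu.trans_lt hz)]
    ring_nf
  have integrable : IntegrableOn (fun z => (2 * b)⁻¹ * exp (-b⁻¹ * z)) (Ioi u) :=
    (exp_neg_integrableOn_Ioi u (inv_pos.2 hb)).const_mul _
  rw [← measure_congr Ioi_ae_eq_Ici, laplace, withDensity_apply _ measurableSet_Ioi,
    setLIntegral_congr_fun measurableSet_Ioi density_eq,
    ← ofReal_integral_eq_lintegral_ofReal integrable (.of_forall fun z => by positivity),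
    integral_const_mul, integral_exp_mul_Ioi (by simpa using hb)]
  congr 1
  field_simp

lemma laplace_Iic_neg (hb : 0 < b) {u : ℝ} (hu : 0 ≤ u) :
    laplace b (Iic (-u)) = ENNReal.ofReal (exp (-u / b) / 2) := by
  rw [← laplace_Ici hb hu, ← Measure.measure_neg, neg_Iic, neg_neg]

lemma isProbabilityMeasure_laplace (hb : 0 < b) : IsProbabilityMeasure (laplace b) := by
  constructor
  rw [← Iio_union_Ici (a := (0 : ℝ)), measure_union (Iio_disjoint_Ici le_rfl) measurableSet_Ici,
    measure_congr Iio_ae_eq_Iic, ← neg_zero, laplace_Iic_neg hb le_rfl, neg_zero,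
    laplace_Ici hb le_rfl, ← ENNReal.ofReal_add (by positivity) (by positivity)]
  norm_num

lemma laplace_prod_sub_tail_le {b₁ b₂ : ℝ} (hb₁ : 0 < b₁) (hb₁₂ : b₁ ≤ b₂) {u : ℝ} (hu : 0 ≤ u) :
    (laplace b₁).prod (laplace b₂) {p | u + u ≤ p.1 - p.2} ≤ ENNReal.ofReal (exp (-u / b₂)) := by
  have hb₂ := hb₁.trans_le hb₁₂
  have := isProbabilityMeasure_laplace hb₁
  have := isProbabilityMeasure_laplace hb₂
  calc (laplace b₁).prod (laplace b₂) {p | u + u ≤ p.1 - p.2}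
      ≤ laplace b₁ (Ici u) + laplace b₂ (Iic (-u)) := Measure.prod_setOf_add_le_sub_le u u
    _ = ENNReal.ofReal (exp (-u / b₁) / 2) + ENNReal.ofReal (exp (-u / b₂) / 2) := by
      rw [laplace_Ici hb₁ hu, laplace_Iic_neg hb₂ hu]
    _ ≤ ENNReal.ofReal (exp (-u / b₂) / 2) + ENNReal.ofReal (exp (-u / b₂) / 2) := by
      have : exp (-u / b₁) ≤ exp (-u / b₂) := by
        rw [exp_le_exp, neg_div, neg_div, neg_le_neg_iff]
        exact div_le_div_of_nonneg_left hu hb₁ hb₁₂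
      gcongr
    _ = ENNReal.ofReal (exp (-u / b₂)) := by
      rw [← ENNReal.ofReal_add (by positivity) (by positivity), add_halves]

/-- tails of a difference of Laplace random variables.
Let `Z ~ Laplace(2/ε)` and `Z' ~ Laplace(4c/ε)` be independent (modelled by the product
measure, with first coordinate `Z` and second coordinate `Z'`).  Then for all
`x, q ∈ ℝ`:
(1) if `x ≥ 0` and `q ≥ x + τ`, then `P(q + Z' ≤ τ + Z) ≤ exp(−|x|ε/(8c))`; and
(2) if `x ≤ 0` and `q ≤ x + τ`, then `P(q + Z' ≥ τ + Z) ≤ exp(−|x|ε/(8c))`. -/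
theorem laplace_sum_tails (ε : ℝ) (hε : 0 < ε) (c : ℕ) (hc : 1 ≤ c) (τ x q : ℝ) :
    (0 ≤ x → x + τ ≤ q →
      ((laplace (2 / ε)).prod (laplace (4 * c / ε))) {p : ℝ × ℝ | q + p.2 ≤ τ + p.1}
        ≤ ENNReal.ofReal (Real.exp (-(|x| * ε) / (8 * c)))) ∧
    (x ≤ 0 → q ≤ x + τ →
      ((laplace (2 / ε)).prod (laplace (4 * c / ε))) {p : ℝ × ℝ | τ + p.1 ≤ q + p.2}
        ≤ ENNReal.ofReal (Real.exp (-(|x| * ε) / (8 * c)))) := by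
  have hcR : (1 : ℝ) ≤ c := by exact_mod_cast hc
  have scales : 2 / ε ≤ 4 * c / ε := by gcongr; linarith
  have tail : ∀ q τ : ℝ, |x| + τ ≤ q →
      ((laplace (2 / ε)).prod (laplace (4 * c / ε))) {p : ℝ × ℝ | q + p.2 ≤ τ + p.1}
        ≤ ENNReal.ofReal (Real.exp (-(|x| * ε) / (8 * c))) := by
    intro q τ hq
    calc _ ≤ ((laplace (2 / ε)).prod (laplace (4 * c / ε)))
            {p : ℝ × ℝ | |x| / 2 + |x| / 2 ≤ p.1 - p.2} :=
          measure_mono fun p hp => by simp only [mem_ofPred_eq] at hp ⊢; linarith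
      _ ≤ ENNReal.ofReal (exp (-(|x| / 2) / (4 * c / ε))) :=
          laplace_prod_sub_tail_le (by positivity) scales (by positivity)
      _ = ENNReal.ofReal (exp (-(|x| * ε) / (8 * c))) := by
          congr 2
          field_simp
          ring
  refine ⟨fun hx hq => tail q τ (by rwa [abs_of_nonneg hx]), fun hx hq => ?_⟩
  convert tail (-q) (-τ) (by rw [abs_of_nonpos hx]; linarith) using 1
  rw [← Measure.measure_preimage_neg]
  congr 1
  ext p
  simp only [mem_preimage, mem_ofPred_eq, Prod.fst_neg, Prod.snd_neg]
  constructor <;> intro h <;> linarith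
end
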